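/- arXiv:0804.0113 — 8 statements merged into one kernel-verified Lean document; each statement's English description precedes it below -/
import Mathlib

section
/- If $\nu(A)\leq \int_{\mathbb{S}}\int_0^\infty \mathbf{1}_A(s\theta)\,s^{-1-\alpha}\bar{q}(s)\,ds\,\mu(d\theta)$ for all Borel $A\subset\mathbb{R}^d$, where $\bar{q}$ is bounded nonincreasing with $\bar{q}(s)\leq K\bar{q}(2s)$, and $\mu(B(\theta,r)\cap\mathbb{S})\leq c\,r^{\gamma-1}$ for all $\theta\in\mathbb{S}$, $r<1/2$, then there is a constant $C$ such that $\nu(B(0,r)^c)\leq C\,r^{-\alpha}\bar{q}(r)$ for all $r\in(0,\infty)$. -/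
open MeasureTheory Set

/-!
Along each unit direction `θ` the ray `s ↦ s θ` leaves the ball `B(0, r)` exactly for `s ≥ r`, so
the inner integral is at most `∫_r^∞ s^{-1-α} q(s) ds ≤ q(r) ∫_r^∞ s^{-1-α} ds = q(r) r^{-α} / α`
by monotonicity of `q`. Integrating over the finite measure `μ` gives the bound with
`C = (μ(𝕊) + 1) / α`, where the `+ 1` keeps `C` positive when `μ = 0`.
-/

theorem lintegral_Ioi_rpow_neg_one_sub {α r : ℝ} (hα : 0 < α) (hr : 0 < r) :
    ∫⁻ s in Ioi r, ENNReal.ofReal (s ^ (-1 - α)) = ENNReal.ofReal (r ^ (-α) / α) := by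
  have hlt : -1 - α < -1 := by linarith
  have hnonneg : 0 ≤ᵐ[volume.restrict (Ioi r)] fun s : ℝ => s ^ (-1 - α) := by
    filter_upwards [self_mem_ae_restrict measurableSet_Ioi] with s hs
    exact Real.rpow_nonneg (hr.trans hs).le _
  rw [← ofReal_integral_eq_lintegral_ofReal (integrableOn_Ioi_rpow_of_lt hlt hr) hnonneg,
    integral_Ioi_rpow_of_lt hlt hr, show -1 - α + 1 = -α by ring, neg_div_neg_eq]

theorem setLIntegral_Ici_rpow_mul_le_of_antitoneOn {α r : ℝ} {q : ℝ → ℝ} (hα : 0 < α)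
    (hr : 0 < r) (hq : AntitoneOn q (Ioi 0)) (hqr : 0 ≤ q r) :
    ∫⁻ s in Ici r, ENNReal.ofReal (s ^ (-1 - α) * q s)
      ≤ ENNReal.ofReal (r ^ (-α) / α * q r) :=
  calc ∫⁻ s in Ici r, ENNReal.ofReal (s ^ (-1 - α) * q s)
      ≤ ∫⁻ s in Ici r, ENNReal.ofReal (s ^ (-1 - α)) * ENNReal.ofReal (q r) := by
        refine setLIntegral_mono' measurableSet_Ici fun s (hs : r ≤ s) => ?_
        rw [← ENNReal.ofReal_mul' hqr]
        exact ENNReal.ofReal_le_ofReal <| mul_le_mul_of_nonneg_left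
          (hq hr (hr.trans_le hs) hs) (Real.rpow_nonneg (hr.le.trans hs) _)
    _ = ENNReal.ofReal (r ^ (-α) / α * q r) := by
        rw [lintegral_mul_const' _ _ ENNReal.ofReal_ne_top, ← restrict_Ioi_eq_restrict_Ici,
          lintegral_Ioi_rpow_neg_one_sub hα hr, ← ENNReal.ofReal_mul (by positivity)]

theorem smul_mem_compl_ball_iff {E : Type*} [NormedAddCommGroup E] [NormedSpace ℝ E] {θ : E}
    (hθ : ‖θ‖ = 1) {r s : ℝ} (hs : 0 ≤ s) : s • θ ∈ (Metric.ball (0 : E) r)ᶜ ↔ r ≤ s := by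
  rw [mem_compl_iff, mem_ball_zero_iff, norm_smul, hθ, mul_one, Real.norm_of_nonneg hs, not_lt]

theorem lintegral_Ioi_indicator_compl_ball_smul {E : Type*} [NormedAddCommGroup E]
    [NormedSpace ℝ E] {θ : E} (hθ : ‖θ‖ = 1) {r : ℝ} (hr : 0 < r) (f : ℝ → ENNReal) :
    ∫⁻ s in Ioi 0, (Metric.ball (0 : E) r)ᶜ.indicator (fun _ => f s) (s • θ)
      = ∫⁻ s in Ici r, f s := by
  have hray : ∀ s ∈ Ioi (0 : ℝ),
      (Metric.ball (0 : E) r)ᶜ.indicator (fun _ => f s) (s • θ) = (Ici r).indicator f s := by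
    intro s (hs : 0 < s)
    by_cases hrs : r ≤ s
    · rw [indicator_of_mem ((smul_mem_compl_ball_iff hθ hs.le).2 hrs),
        indicator_of_mem (show s ∈ Ici r from hrs)]
    · rw [indicator_of_notMem (mt (smul_mem_compl_ball_iff hθ hs.le).1 hrs),
        indicator_of_notMem (show s ∉ Ici r from hrs)]
  rw [setLIntegral_congr_fun measurableSet_Ioi hray, setLIntegral_indicator measurableSet_Ici,
    inter_eq_left.2 (Ici_subset_Ioi.2 hr)]

theorem stmt1_general (d : ℕ) (α : ℝ)
    (hα : α ∈ Set.Ioo (0:ℝ) 2)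
    (μ ν : Measure (EuclideanSpace ℝ (Fin d))) [IsFiniteMeasure μ]
    (hμS : μ {x | ‖x‖ ≠ 1} = 0)
    (q : ℝ → ℝ)
    (hqpos : ∀ s, 0 < s → 0 < q s)
    (hqmono : ∀ s t : ℝ, 0 < s → s ≤ t → q t ≤ q s)
    (hν : ∀ A : Set (EuclideanSpace ℝ (Fin d)), MeasurableSet A →
      ν A ≤ ∫⁻ θ, (∫⁻ s in Ioi (0:ℝ),
        A.indicator (fun _ => ENNReal.ofReal (s ^ (-1 - α) * q s)) (s • θ)) ∂μ) :
    ∃ C : ℝ, 0 < C ∧ ∀ r : ℝ, 0 < r →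
      ν (Metric.ball (0 : EuclideanSpace ℝ (Fin d)) r)ᶜ
        ≤ ENNReal.ofReal (C * r ^ (-α) * q r) := by
  have hα0 : 0 < α := hα.1
  have hq : AntitoneOn q (Ioi 0) := fun s hs t _ hst => hqmono s t hs hst
  set M := (μ univ).toReal
  refine ⟨(M + 1) / α, by positivity, fun r hr => ?_⟩
  have hunit : ∀ᵐ θ ∂μ, ‖θ‖ = 1 := ae_iff.2 hμS
  calc ν (Metric.ball 0 r)ᶜ
      ≤ ∫⁻ _, ENNReal.ofReal (r ^ (-α) / α * q r) ∂μ := by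
        refine (hν _ measurableSet_ball.compl).trans (lintegral_mono_ae ?_)
        filter_upwards [hunit] with θ hθ
        rw [lintegral_Ioi_indicator_compl_ball_smul hθ hr]
        exact setLIntegral_Ici_rpow_mul_le_of_antitoneOn hα0 hr hq (hqpos r hr).le
    _ = ENNReal.ofReal (M * (r ^ (-α) / α * q r)) := by
        rw [lintegral_const, mul_comm, ENNReal.ofReal_mul ENNReal.toReal_nonneg,
          ENNReal.ofReal_toReal (measure_ne_top μ univ)]
    _ ≤ ENNReal.ofReal ((M + 1) / α * r ^ (-α) * q r) := by
        have hrq : 0 ≤ r ^ (-α) * q r := mul_nonneg (Real.rpow_nonneg hr.le _) (hqpos r hr).le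
        refine ENNReal.ofReal_le_ofReal ?_
        calc M * (r ^ (-α) / α * q r) = M / α * (r ^ (-α) * q r) := by ring
          _ ≤ (M + 1) / α * (r ^ (-α) * q r) := by gcongr; linarith
          _ = (M + 1) / α * r ^ (-α) * q r := by ring

/-- If `ν(A) ≤ ∫_𝕊 ∫_0^∞ 1_A(sθ) s^{-1-α} q(s) ds μ(dθ)` with `q`
bounded nonincreasing and doubling, and `μ(B(θ,r) ∩ 𝕊) ≤ c r^{γ-1}`, then
`ν(B(0,r)^c) ≤ C r^{-α} q(r)` for all `r > 0`. -/
theorem stmt1 (d : ℕ) (hd : 1 ≤ d) (α γ K c : ℝ)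
    (hα : α ∈ Set.Ioo (0:ℝ) 2) (hγ : γ ∈ Set.Icc (1:ℝ) d) (hK : 1 ≤ K) (hc : 0 < c)
    (μ ν : Measure (EuclideanSpace ℝ (Fin d))) [IsFiniteMeasure μ]
    (hμS : μ {x | ‖x‖ ≠ 1} = 0)
    (q : ℝ → ℝ)
    (hqpos : ∀ s, 0 < s → 0 < q s)
    (hqbdd : ∃ B : ℝ, ∀ s, 0 < s → q s ≤ B)
    (hqmono : ∀ s t : ℝ, 0 < s → s ≤ t → q t ≤ q s)
    (hqdbl : ∀ s, 0 < s → q s ≤ K * q (2 * s))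
    (hν : ∀ A : Set (EuclideanSpace ℝ (Fin d)), MeasurableSet A →
      ν A ≤ ∫⁻ θ, (∫⁻ s in Ioi (0:ℝ),
        A.indicator (fun _ => ENNReal.ofReal (s ^ (-1 - α) * q s)) (s • θ)) ∂μ)
    (hμ : ∀ θ : EuclideanSpace ℝ (Fin d), ‖θ‖ = 1 → ∀ r : ℝ, 0 < r → r < 1/2 →
      μ (Metric.ball θ r ∩ {x | ‖x‖ = 1}) ≤ ENNReal.ofReal (c * r ^ (γ - 1))) :
    ∃ C : ℝ, 0 < C ∧ ∀ r : ℝ, 0 < r →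
      ν (Metric.ball (0 : EuclideanSpace ℝ (Fin d)) r)ᶜ
        ≤ ENNReal.ofReal (C * r ^ (-α) * q r) :=
  stmt1_general d α hα μ ν hμS q hqpos hqmono hν
end

section
/- If $\nu(A)\leq \int_{\mathbb{S}}\int_0^\infty \mathbf{1}_A(s\theta)\,s^{-1-\alpha}\bar{q}(s)\,ds\,\mu(d\theta)$ for all Borel $A$, with $\bar{q}$ bounded nonincreasing satisfying $\bar{q}(s)\leq K\bar{q}(2s)$, and $\mu(B(\theta,r)\cap\mathbb{S})\leq c\,r^{\gamma-1}$ for $\theta\in\mathbb{S}$, $r<1/2$, then there is a constant $C$ such that $\nu(B(x,r))\leq C\,r^{\gamma}|x|^{-\alpha-\gamma}\bar{q}(|x|)$ for all $x\in\mathbb{R}^d\setminus\{0\}$ and $0<r<|x|/2$. -/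
/-!
In polar coordinates `y = s • θ`, a point of `B(x, r)` has `|s - ‖x‖| < r` and `θ` within
`2r / ‖x‖` of `x / ‖x‖`. On that shell `s ≥ ‖x‖ / 2`, so monotonicity and doubling bound the
weight `s ^ (-1 - α) * q s` by a multiple of `‖x‖ ^ (-1 - α) * q ‖x‖`; the shell has length `2r`
and the cap has `μ`-mass `≲ (r / ‖x‖) ^ (γ - 1)`. The product is `≲ r ^ γ ‖x‖ ^ (-α - γ) q ‖x‖`.
-/

open MeasureTheory Set

section RadialGeometry

variable {E : Type*} [NormedAddCommGroup E] [NormedSpace ℝ E] {x θ : E} {s r : ℝ}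

lemma abs_sub_norm_lt_of_smul_mem_ball (hθ : ‖θ‖ = 1) (hs : 0 ≤ s)
    (hmem : s • θ ∈ Metric.ball x r) : |s - ‖x‖| < r := by
  rw [mem_ball_iff_norm] at hmem
  calc |s - ‖x‖| = |‖s • θ‖ - ‖x‖| := by rw [norm_smul, hθ, mul_one, Real.norm_of_nonneg hs]
    _ ≤ ‖s • θ - x‖ := abs_norm_sub_norm_le _ _
    _ < r := hmem

lemma mem_ball_inv_norm_smul_of_smul_mem_ball (hx : x ≠ 0) (hθ : ‖θ‖ = 1) (hs : 0 ≤ s)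
    (hmem : s • θ ∈ Metric.ball x r) : θ ∈ Metric.ball (‖x‖⁻¹ • x) (2 * r / ‖x‖) := by
  have hR : 0 < ‖x‖ := norm_pos_iff.mpr hx
  have hsR := abs_sub_norm_lt_of_smul_mem_ball hθ hs hmem
  rw [mem_ball_iff_norm] at hmem ⊢
  have hRθ : ‖‖x‖ • θ - x‖ < 2 * r :=
    calc ‖‖x‖ • θ - x‖ = ‖(‖x‖ - s) • θ + (s • θ - x)‖ := by rw [sub_smul]; abel_nf
      _ ≤ |‖x‖ - s| + ‖s • θ - x‖ := by
        grw [norm_add_le, norm_smul, hθ, mul_one, Real.norm_eq_abs]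
      _ < 2 * r := by rw [abs_sub_comm]; linarith
  calc ‖θ - ‖x‖⁻¹ • x‖ = ‖x‖⁻¹ * ‖‖x‖ • θ - x‖ := by
        rw [← norm_smul_of_nonneg (inv_nonneg.mpr hR.le), smul_sub, inv_smul_smul₀ hR.ne']
    _ < 2 * r / ‖x‖ := by rw [inv_mul_eq_div]; gcongr

lemma setLIntegral_indicator_ball_smul_le (hx : x ≠ 0) (hr : 0 ≤ r) (hθ : ‖θ‖ = 1)
    {f : ℝ → ℝ} {b : ℝ} (hf : ∀ s ∈ Ioo (‖x‖ - r) (‖x‖ + r), f s ≤ b) :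
    ∫⁻ s in Ioi 0, (Metric.ball x r).indicator (fun _ => ENNReal.ofReal (f s)) (s • θ)
      ≤ (Metric.ball (‖x‖⁻¹ • x) (2 * r / ‖x‖) ∩ {y | ‖y‖ = 1}).indicator
          (fun _ => ENNReal.ofReal (2 * r * b)) θ := by
  by_cases hcap : θ ∈ Metric.ball (‖x‖⁻¹ • x) (2 * r / ‖x‖)
  · rw [indicator_of_mem (show θ ∈ _ ∩ _ from ⟨hcap, hθ⟩)]
    calc ∫⁻ s in Ioi 0, (Metric.ball x r).indicator (fun _ => ENNReal.ofReal (f s)) (s • θ)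
        ≤ ∫⁻ s in Ioi 0, (Ioo (‖x‖ - r) (‖x‖ + r)).indicator (fun _ => ENNReal.ofReal b) s := by
          refine setLIntegral_mono (measurable_const.indicator measurableSet_Ioo) fun s hs => ?_
          by_cases hm : s • θ ∈ Metric.ball x r
          · have hshell : s ∈ Ioo (‖x‖ - r) (‖x‖ + r) := by
              obtain ⟨hlo, hhi⟩ := abs_lt.mp (abs_sub_norm_lt_of_smul_mem_ball hθ hs.le hm)
              exact ⟨by linarith, by linarith⟩
            rw [indicator_of_mem hm, indicator_of_mem hshell]
            exact ENNReal.ofReal_le_ofReal (hf s hshell)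
          · simp [indicator_of_notMem hm]
      _ ≤ ∫⁻ s, (Ioo (‖x‖ - r) (‖x‖ + r)).indicator (fun _ => ENNReal.ofReal b) s :=
          setLIntegral_le_lintegral _ _
      _ = ENNReal.ofReal (2 * r * b) := by
          rw [lintegral_indicator_const measurableSet_Ioo, Real.volume_Ioo, mul_comm,
            ← ENNReal.ofReal_mul (by linarith)]
          ring_nf
  · rw [indicator_of_notMem fun h => hcap h.1]
    refine (setLIntegral_mono measurable_const fun s hs => ?_).trans_eq lintegral_zero
    rw [indicator_of_notMem fun hm => hcap (mem_ball_inv_norm_smul_of_smul_mem_ball hx hθ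
      hs.le hm)]

variable [MeasurableSpace E] [BorelSpace E]

lemma lintegral_setLIntegral_indicator_ball_smul_le (μ : Measure E) (hμS : ∀ᵐ θ ∂μ, ‖θ‖ = 1)
    (hx : x ≠ 0) (hr : 0 ≤ r) {f : ℝ → ℝ} {b : ℝ}
    (hf : ∀ s ∈ Ioo (‖x‖ - r) (‖x‖ + r), f s ≤ b) :
    ∫⁻ θ, (∫⁻ s in Ioi 0, (Metric.ball x r).indicator (fun _ => ENNReal.ofReal (f s)) (s • θ)) ∂μ
      ≤ ENNReal.ofReal (2 * r * b) * μ (Metric.ball (‖x‖⁻¹ • x) (2 * r / ‖x‖) ∩ {y | ‖y‖ = 1}) :=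
  (lintegral_mono_ae (hμS.mono fun _ hθ => setLIntegral_indicator_ball_smul_le hx hr hθ hf)).trans_eq
    (lintegral_indicator_const (Metric.isOpen_ball.measurableSet.inter
      (isClosed_eq continuous_norm continuous_const).measurableSet) _)

end RadialGeometry

/-- A bound on small balls extends to all balls, since a large ball costs at most `μ univ`. -/
lemma measure_ball_inter_le_of_forall_lt_half {X : Type*} [PseudoMetricSpace X]
    [MeasurableSpace X] (μ : Measure X) [IsFiniteMeasure μ] {S : Set X} {θ : X} {c β : ℝ}
    (hβ : 0 ≤ β)
    (hsmall : ∀ r : ℝ, 0 < r → r < 1 / 2 → μ (Metric.ball θ r ∩ S) ≤ ENNReal.ofReal (c * r ^ β))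
    {r : ℝ} (hr : 0 < r) :
    μ (Metric.ball θ r ∩ S) ≤ ENNReal.ofReal (max c (μ.real univ * 2 ^ β) * r ^ β) := by
  rcases lt_or_ge r (1 / 2) with hlt | hge
  · exact (hsmall r hr hlt).trans (ENNReal.ofReal_le_ofReal (by gcongr; exact le_max_left _ _))
  · calc μ (Metric.ball θ r ∩ S) ≤ μ univ := measure_mono (subset_univ _)
      _ = ENNReal.ofReal (μ.real univ * 1) := by rw [mul_one, ofReal_measureReal]
      _ ≤ ENNReal.ofReal (μ.real univ * (2 * r) ^ β) := by
          gcongr; exact Real.one_le_rpow (by linarith) hβ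
      _ ≤ ENNReal.ofReal (max c (μ.real univ * 2 ^ β) * r ^ β) := by
          rw [Real.mul_rpow zero_le_two hr.le, ← mul_assoc]
          gcongr
          exact le_max_right _ _

lemma rpow_mul_le_of_doubling {q : ℝ → ℝ} {K β R s : ℝ} (hβ : β ≤ 0)
    (hqpos : ∀ s, 0 < s → 0 < q s) (hqmono : ∀ s t : ℝ, 0 < s → s ≤ t → q t ≤ q s)
    (hqdbl : ∀ s, 0 < s → q s ≤ K * q (2 * s)) (hR : 0 < R) (hs : R / 2 ≤ s) :
    s ^ β * q s ≤ (R / 2) ^ β * (K * q R) := by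
  have hR2 : 0 < R / 2 := by positivity
  have hq : q s ≤ K * q R :=
    calc q s ≤ q (R / 2) := hqmono _ _ hR2 hs
      _ ≤ K * q (2 * (R / 2)) := hqdbl _ hR2
      _ = K * q R := by ring_nf
  exact mul_le_mul (Real.rpow_le_rpow_of_nonpos hR2 hs hβ) hq
    (hqpos s (hR2.trans_le hs)).le (by positivity)

lemma shell_mul_cap_eq {α γ c K Q r R : ℝ} (hr : 0 < r) (hR : 0 < R) :
    2 * r * ((R / 2) ^ (-1 - α) * (K * Q)) * (c * (2 * r / R) ^ (γ - 1))
      = c * K * 2 ^ (γ + 1 + α) * r ^ γ * R ^ (-α - γ) * Q := by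
  rw [Real.div_rpow hR.le zero_le_two, Real.div_rpow (by positivity) hR.le,
    Real.mul_rpow zero_le_two hr.le,
    show (2 : ℝ) ^ (γ + 1 + α) = 2 ^ (γ - 1) / 2 ^ (-1 - α) * 2 by
      rw [← Real.rpow_sub two_pos, ← Real.rpow_add_one two_ne_zero]; ring_nf,
    show r ^ γ = r ^ (γ - 1) * r by rw [← Real.rpow_add_one hr.ne', sub_add_cancel],
    show R ^ (-α - γ) = R ^ (-1 - α) / R ^ (γ - 1) by rw [← Real.rpow_sub hR]; ring_nf]
  field_simp

theorem stmt2_general (d : ℕ) (α γ K c : ℝ)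
    (hα : α ∈ Set.Ioo (0:ℝ) 2) (hγ : γ ∈ Set.Icc (1:ℝ) d) (hK : 1 ≤ K) (hc : 0 < c)
    (μ ν : Measure (EuclideanSpace ℝ (Fin d))) [IsFiniteMeasure μ]
    (hμS : μ {x | ‖x‖ ≠ 1} = 0)
    (q : ℝ → ℝ)
    (hqpos : ∀ s, 0 < s → 0 < q s)
    (hqmono : ∀ s t : ℝ, 0 < s → s ≤ t → q t ≤ q s)
    (hqdbl : ∀ s, 0 < s → q s ≤ K * q (2 * s))
    (hν : ∀ A : Set (EuclideanSpace ℝ (Fin d)), MeasurableSet A →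
      ν A ≤ ∫⁻ θ, (∫⁻ s in Ioi (0:ℝ),
        A.indicator (fun _ => ENNReal.ofReal (s ^ (-1 - α) * q s)) (s • θ)) ∂μ)
    (hμ : ∀ θ : EuclideanSpace ℝ (Fin d), ‖θ‖ = 1 → ∀ r : ℝ, 0 < r → r < 1/2 →
      μ (Metric.ball θ r ∩ {x | ‖x‖ = 1}) ≤ ENNReal.ofReal (c * r ^ (γ - 1))) :
    ∃ C : ℝ, 0 < C ∧ ∀ (x : EuclideanSpace ℝ (Fin d)) (r : ℝ), x ≠ 0 →
      0 < r → r < ‖x‖ / 2 →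
      ν (Metric.ball x r)
        ≤ ENNReal.ofReal (C * r ^ γ * ‖x‖ ^ (-α - γ) * q ‖x‖) := by
  set c' := max c (μ.real univ * 2 ^ (γ - 1))
  have hc' : 0 < c' := hc.trans_le (le_max_left _ _)
  refine ⟨c' * K * 2 ^ (γ + 1 + α), by positivity, fun x r hx hr hrx => ?_⟩
  have hR : 0 < ‖x‖ := norm_pos_iff.mpr hx
  set b := (‖x‖ / 2) ^ (-1 - α) * (K * q ‖x‖)
  have hb : 0 ≤ b := by have := hqpos _ hR; positivity
  have hweight : ∀ s ∈ Ioo (‖x‖ - r) (‖x‖ + r), s ^ (-1 - α) * q s ≤ b := fun s hs =>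
    rpow_mul_le_of_doubling (by linarith [hα.1]) hqpos hqmono hqdbl hR (by linarith [hs.1])
  have hunit : ‖‖x‖⁻¹ • x‖ = 1 := by rw [norm_smul, norm_inv, norm_norm, inv_mul_cancel₀ hR.ne']
  have hcap := measure_ball_inter_le_of_forall_lt_half μ (by linarith [hγ.1])
    (hμ _ hunit) (by positivity : 0 < 2 * r / ‖x‖)
  calc ν (Metric.ball x r)
      ≤ _ := hν _ measurableSet_ball
    _ ≤ ENNReal.ofReal (2 * r * b)
          * μ (Metric.ball (‖x‖⁻¹ • x) (2 * r / ‖x‖) ∩ {y | ‖y‖ = 1}) :=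
        lintegral_setLIntegral_indicator_ball_smul_le μ (ae_iff.2 hμS) hx hr.le hweight
    _ ≤ ENNReal.ofReal (2 * r * b) * ENNReal.ofReal (c' * (2 * r / ‖x‖) ^ (γ - 1)) := by
        gcongr
    _ = _ := by rw [← ENNReal.ofReal_mul (by positivity), shell_mul_cap_eq hr hR]

/-- If `ν(A) ≤ ∫_𝕊 ∫_0^∞ 1_A(sθ) s^{-1-α} q(s) ds μ(dθ)` with `q`
bounded nonincreasing and doubling, and `μ(B(θ,r) ∩ 𝕊) ≤ c r^{γ-1}`, then
`ν(B(x,r)) ≤ C r^γ |x|^{-α-γ} q(|x|)` for `x ≠ 0`, `0 < r < |x|/2`. -/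
theorem stmt2 (d : ℕ) (hd : 1 ≤ d) (α γ K c : ℝ)
    (hα : α ∈ Set.Ioo (0:ℝ) 2) (hγ : γ ∈ Set.Icc (1:ℝ) d) (hK : 1 ≤ K) (hc : 0 < c)
    (μ ν : Measure (EuclideanSpace ℝ (Fin d))) [IsFiniteMeasure μ]
    (hμS : μ {x | ‖x‖ ≠ 1} = 0)
    (q : ℝ → ℝ)
    (hqpos : ∀ s, 0 < s → 0 < q s)
    (hqbdd : ∃ B : ℝ, ∀ s, 0 < s → q s ≤ B)
    (hqmono : ∀ s t : ℝ, 0 < s → s ≤ t → q t ≤ q s)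
    (hqdbl : ∀ s, 0 < s → q s ≤ K * q (2 * s))
    (hν : ∀ A : Set (EuclideanSpace ℝ (Fin d)), MeasurableSet A →
      ν A ≤ ∫⁻ θ, (∫⁻ s in Ioi (0:ℝ),
        A.indicator (fun _ => ENNReal.ofReal (s ^ (-1 - α) * q s)) (s • θ)) ∂μ)
    (hμ : ∀ θ : EuclideanSpace ℝ (Fin d), ‖θ‖ = 1 → ∀ r : ℝ, 0 < r → r < 1/2 →
      μ (Metric.ball θ r ∩ {x | ‖x‖ = 1}) ≤ ENNReal.ofReal (c * r ^ (γ - 1))) :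
    ∃ C : ℝ, 0 < C ∧ ∀ (x : EuclideanSpace ℝ (Fin d)) (r : ℝ), x ≠ 0 →
      0 < r → r < ‖x‖ / 2 →
      ν (Metric.ball x r)
        ≤ ENNReal.ofReal (C * r ^ γ * ‖x‖ ^ (-α - γ) * q ‖x‖) :=
  stmt2_general d α γ K c hα hγ hK hc μ ν hμS q hqpos hqmono hqdbl hν hμ
end

section
/- Let $\nu$ be a measure on $\mathbb{R}^d$ satisfying $\nu(B(0,r)^c)\leq c\,r^{-\alpha}\bar{q}(r)$ for all $r>0$ and $\int_{|y|<1}|y|^2\nu(dy)<\infty$, where $\bar{q}$ is bounded nonincreasing, satisfies the doubling condition $\bar{q}(s)\leq K\bar{q}(2s)$, and $\int_1^\infty s^{\beta-\alpha-1}\bar{q}(s)\,ds<\infty$ for some $\beta\in[\alpha,2]$. Then there exists a constant $C$ such that $\int_{|y|<r}|y|^2\,\nu(dy)\leq C\,r^{2-\beta}$ for all $r\geq 1$. -/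
open MeasureTheory Set

/-- If `ν(B(0,r)^c) ≤ c r^{-α} q(r)` for all `r > 0`,
`∫_{|y|<1} |y|^2 ν(dy) < ∞`, `q` is bounded nonincreasing doubling and
`∫_1^∞ s^{β-α-1} q(s) ds < ∞` with `β ∈ [α,2]`, then
`∫_{|y|<r} |y|^2 ν(dy) ≤ C r^{2-β}` for all `r ≥ 1`. -/
theorem stmt6 (d : ℕ) (hd : 1 ≤ d) (α β K c : ℝ)
    (hα : α ∈ Set.Ioo (0:ℝ) 2) (hβ : β ∈ Set.Icc α 2) (hK : 1 ≤ K) (hc : 0 < c)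
    (ν : Measure (EuclideanSpace ℝ (Fin d)))
    (q : ℝ → ℝ)
    (hqpos : ∀ s, 0 < s → 0 < q s)
    (hqbdd : ∃ B : ℝ, ∀ s, 0 < s → q s ≤ B)
    (hqmono : ∀ s t : ℝ, 0 < s → s ≤ t → q t ≤ q s)
    (hqdbl : ∀ s, 0 < s → q s ≤ K * q (2 * s))
    (hqint : IntegrableOn (fun s : ℝ => s ^ (β - α - 1) * q s) (Set.Ioi 1))
    (hν : ∀ r : ℝ, 0 < r →
      ν (Metric.ball (0 : EuclideanSpace ℝ (Fin d)) r)ᶜ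
        ≤ ENNReal.ofReal (c * r ^ (-α) * q r))
    (hν2 : ∫⁻ y in Metric.ball (0 : EuclideanSpace ℝ (Fin d)) 1,
        ENNReal.ofReal (‖y‖ ^ 2) ∂ν < ⊤) :
    ∃ C : ℝ, 0 < C ∧ ∀ r : ℝ, 1 ≤ r →
      ∫⁻ y in Metric.ball (0 : EuclideanSpace ℝ (Fin d)) r,
          ENNReal.ofReal (‖y‖ ^ 2) ∂ν
        ≤ ENNReal.ofReal (C * r ^ (2 - β)) := by
  obtain ⟨hα0, hα2⟩ := hα
  obtain ⟨hαβ, hβ2⟩ := hβ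
  -- the substituted integrand
  set gq : ℝ → ℝ := fun t => (Real.sqrt t) ^ (β - α - 2) * q (Real.sqrt t) with hgq_def
  have hβα2 : β - α - 2 < 0 := by linarith
  have hgq_nn : ∀ t : ℝ, 0 ≤ gq t := by
    intro t
    rcases le_or_gt t 0 with ht | ht
    · have hs0 : Real.sqrt t = 0 := Real.sqrt_eq_zero'.mpr ht
      simp [hgq_def, hs0, Real.zero_rpow (ne_of_lt hβα2)]
    · exact mul_nonneg (Real.rpow_nonneg (Real.sqrt_nonneg t) _)
        (hqpos _ (Real.sqrt_pos.mpr ht)).le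
  -- change of variables data
  have himg : (fun x : ℝ => x ^ 2) '' Ioi 1 = Ioi (1:ℝ) := by
    ext t
    constructor
    · rintro ⟨x, hx, rfl⟩
      exact one_lt_pow₀ (mem_Ioi.mp hx) two_ne_zero
    · intro ht
      have ht1 : (1:ℝ) < t := mem_Ioi.mp ht
      refine ⟨Real.sqrt t, ?_, ?_⟩
      · have : (1:ℝ) < Real.sqrt t := by
          rw [show (1:ℝ) = Real.sqrt 1 by simp]
          exact Real.sqrt_lt_sqrt (by norm_num) ht1
        exact this
      · exact Real.sq_sqrt (by linarith)
  have hder : ∀ x ∈ Ioi (1:ℝ), HasDerivWithinAt (fun y : ℝ => y ^ 2) (2 * x) (Ioi 1) x := by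
    intro x _
    simpa using (hasDerivAt_pow 2 x).hasDerivWithinAt
  have hinj : InjOn (fun x : ℝ => x ^ 2) (Ioi 1) := by
    intro a ha b hb h
    simp only at h
    have ha1 := mem_Ioi.mp ha
    have hb1 := mem_Ioi.mp hb
    rcases lt_trichotomy a b with h' | h' | h'
    · exact absurd h (ne_of_lt (pow_lt_pow_left₀ h' (by linarith) two_ne_zero))
    · exact h'
    · exact absurd h.symm (ne_of_lt (pow_lt_pow_left₀ h' (by linarith) two_ne_zero))
  -- pointwise identification of the substituted integrand
  have hEq : ∀ x ∈ Ioi (1:ℝ),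
      |2 * x| • gq (x ^ 2) = 2 * (x ^ (β - α - 1) * q x) := by
    intro x hx
    have hx1 := mem_Ioi.mp hx
    have hx0 : (0:ℝ) < x := by linarith
    have hsq : Real.sqrt (x ^ 2) = x := Real.sqrt_sq hx0.le
    have habs : |2 * x| = 2 * x := abs_of_pos (by linarith)
    have hpow : x ^ (β - α - 1) = x ^ (1:ℝ) * x ^ (β - α - 2) := by
      rw [← Real.rpow_add hx0]; ring_nf
    simp only [hgq_def, hsq, habs, smul_eq_mul]
    rw [hpow, Real.rpow_one]
    ring
  -- integrability of gq on (1, ∞)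
  have hint2 : IntegrableOn (fun x : ℝ => |2 * x| • gq (x ^ 2)) (Ioi 1) := by
    refine MeasureTheory.IntegrableOn.congr_fun (hqint.const_mul 2) ?_ measurableSet_Ioi
    intro x hx
    exact (hEq x hx).symm
  have hgqint : IntegrableOn gq (Ioi 1) := by
    rw [← himg]
    exact (integrableOn_image_iff_integrableOn_abs_deriv_smul
      measurableSet_Ioi hder hinj gq).mpr hint2
  -- the value of the substituted integral
  set Iq : ℝ := ∫ x in Ioi (1:ℝ), x ^ (β - α - 1) * q x with hIq_def
  have hIq_nn : 0 ≤ Iq := by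
    refine setIntegral_nonneg measurableSet_Ioi ?_
    intro x hx
    have hx0 : (0:ℝ) < x := lt_trans one_pos (mem_Ioi.mp hx)
    exact mul_nonneg (Real.rpow_nonneg hx0.le _) (hqpos x hx0).le
  have hCoV : ∫ t in Ioi (1:ℝ), gq t = 2 * Iq := by
    rw [← himg, integral_image_eq_integral_abs_deriv_smul measurableSet_Ioi hder hinj]
    rw [setIntegral_congr_fun measurableSet_Ioi hEq]
    rw [MeasureTheory.integral_const_mul]
  have hofReal : ∫⁻ t in Ioi (1:ℝ), ENNReal.ofReal (gq t) = ENNReal.ofReal (2 * Iq) := by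
    rw [← MeasureTheory.ofReal_integral_eq_lintegral_ofReal hgqint
      (Filter.Eventually.of_forall hgq_nn), hCoV]
  -- finite lower part
  set M := ∫⁻ y in Metric.ball (0 : EuclideanSpace ℝ (Fin d)) 1,
      ENNReal.ofReal (‖y‖ ^ 2) ∂ν with hM_def
  set MR : ℝ := M.toReal with hMR_def
  have hMR_nn : 0 ≤ MR := ENNReal.toReal_nonneg
  have hM_eq : M = ENNReal.ofReal MR := (ENNReal.ofReal_toReal hν2.ne).symm
  have hq1 : 0 < q 1 := hqpos 1 one_pos
  refine ⟨MR + c * q 1 + 2 * c * Iq, by positivity, ?_⟩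
  intro r hr
  have hr0 : (0:ℝ) < r := by linarith
  set A : Set (EuclideanSpace ℝ (Fin d)) :=
    Metric.ball 0 r \ Metric.ball 0 1 with hA_def
  have hA_meas : MeasurableSet A :=
    Metric.isOpen_ball.measurableSet.diff Metric.isOpen_ball.measurableSet
  have hsplit : Metric.ball (0 : EuclideanSpace ℝ (Fin d)) r
      = Metric.ball 0 1 ∪ A := (union_diff_cancel (Metric.ball_subset_ball hr)).symm
  have hf_meas : Measurable fun y : EuclideanSpace ℝ (Fin d) => ‖y‖ ^ 2 :=
    measurable_norm.pow_const 2
  have hSt_meas : ∀ t : ℝ, MeasurableSet {y : EuclideanSpace ℝ (Fin d) | t < ‖y‖ ^ 2} :=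
    fun t => measurableSet_lt measurable_const hf_meas
  -- layer cake for the annulus part
  have hlayer : ∫⁻ y in A, ENNReal.ofReal (‖y‖ ^ 2) ∂ν
      = ∫⁻ t in Ioi 0, (ν.restrict A) {y | t < ‖y‖ ^ 2} :=
    lintegral_eq_lintegral_meas_lt (ν.restrict A)
      (Filter.Eventually.of_forall fun y => sq_nonneg ‖y‖) hf_meas.aemeasurable
  have hrp1 : (1:ℝ) ≤ r ^ (2 - β) := Real.one_le_rpow hr (by linarith)
  have hrp0 : (0:ℝ) ≤ r ^ (2 - β) := by linarith
  -- bound on (0,1]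
  have hbound1 : ∀ t ∈ Ioc (0:ℝ) 1,
      (ν.restrict A) {y | t < ‖y‖ ^ 2} ≤ ENNReal.ofReal (c * q 1) := by
    intro t _
    rw [Measure.restrict_apply (hSt_meas t)]
    calc ν ({y | t < ‖y‖ ^ 2} ∩ A) ≤ ν (Metric.ball (0 : EuclideanSpace ℝ (Fin d)) 1)ᶜ := by
          refine measure_mono ?_
          intro y hy
          exact (diff_subset_compl _ _) hy.2
      _ ≤ ENNReal.ofReal (c * (1:ℝ) ^ (-α) * q 1) := hν 1 one_pos
      _ = ENNReal.ofReal (c * q 1) := by rw [Real.one_rpow]; ring_nf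
  -- bound on (1,∞)
  have hbound2 : ∀ t ∈ Ioi (1:ℝ),
      (ν.restrict A) {y | t < ‖y‖ ^ 2}
        ≤ ENNReal.ofReal (c * r ^ (2 - β)) * ENNReal.ofReal (gq t) := by
    intro t ht
    have ht1 : (1:ℝ) < t := mem_Ioi.mp ht
    rw [Measure.restrict_apply (hSt_meas t)]
    rcases le_or_gt (r ^ 2) t with hrt | hrt
    · have hempty : {y : EuclideanSpace ℝ (Fin d) | t < ‖y‖ ^ 2} ∩ A = ∅ := by
        ext y
        simp only [mem_inter_iff, mem_setOf_eq, mem_empty_iff_false, iff_false, not_and]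
        intro hty hyA
        have : ‖y‖ < r := mem_ball_zero_iff.mp hyA.1
        nlinarith [norm_nonneg y]
      rw [hempty]
      simp
    · set s : ℝ := Real.sqrt t with hs_def
      have hs1 : (1:ℝ) < s := by
        rw [hs_def, show (1:ℝ) = Real.sqrt 1 by simp]
        exact Real.sqrt_lt_sqrt (by norm_num) ht1
      have hs0 : (0:ℝ) < s := by linarith
      have hssq : s ^ 2 = t := Real.sq_sqrt (by linarith)
      have hsr : s ≤ r := by
        nlinarith
      have hsub : {y : EuclideanSpace ℝ (Fin d) | t < ‖y‖ ^ 2} ∩ A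
          ⊆ (Metric.ball (0 : EuclideanSpace ℝ (Fin d)) s)ᶜ := by
        intro y hy
        simp only [mem_compl_iff, Metric.mem_ball, dist_zero_right]
        have hty : t < ‖y‖ ^ 2 := hy.1
        intro hlt
        nlinarith [norm_nonneg y]
      calc ν ({y | t < ‖y‖ ^ 2} ∩ A)
          ≤ ν (Metric.ball (0 : EuclideanSpace ℝ (Fin d)) s)ᶜ := measure_mono hsub
        _ ≤ ENNReal.ofReal (c * s ^ (-α) * q s) := hν s hs0
        _ ≤ ENNReal.ofReal (c * r ^ (2 - β)) * ENNReal.ofReal (gq t) := by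
            rw [← ENNReal.ofReal_mul (by positivity)]
            refine ENNReal.ofReal_le_ofReal ?_
            have h1 : s ^ (-α) = s ^ (2 - β) * s ^ (β - α - 2) := by
              rw [← Real.rpow_add hs0]; ring_nf
            have h2 : s ^ (2 - β) ≤ r ^ (2 - β) :=
              Real.rpow_le_rpow hs0.le hsr (by linarith)
            have hgqt : gq t = s ^ (β - α - 2) * q s := by rw [hgq_def]
            rw [hgqt, h1]
            have h3 : (0:ℝ) ≤ c * s ^ (β - α - 2) * q s :=
              mul_nonneg (mul_nonneg hc.le (Real.rpow_nonneg hs0.le _)) (hqpos s hs0).le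
            calc c * (s ^ (2 - β) * s ^ (β - α - 2)) * q s
                = s ^ (2 - β) * (c * s ^ (β - α - 2) * q s) := by ring
              _ ≤ r ^ (2 - β) * (c * s ^ (β - α - 2) * q s) :=
                  mul_le_mul_of_nonneg_right h2 h3
              _ = c * r ^ (2 - β) * (s ^ (β - α - 2) * q s) := by ring
  -- assemble the annulus bound
  have hIoi_split : Ioi (0:ℝ) = Ioc 0 1 ∪ Ioi 1 := (Ioc_union_Ioi_eq_Ioi zero_le_one).symm
  have hannulus : ∫⁻ y in A, ENNReal.ofReal (‖y‖ ^ 2) ∂ν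
      ≤ ENNReal.ofReal (c * q 1) + ENNReal.ofReal (c * r ^ (2 - β)) * ENNReal.ofReal (2 * Iq) := by
    rw [hlayer, hIoi_split,
      lintegral_union measurableSet_Ioi (Ioc_disjoint_Ioi le_rfl)]
    gcongr
    · calc ∫⁻ t in Ioc (0:ℝ) 1, (ν.restrict A) {y | t < ‖y‖ ^ 2}
          ≤ ∫⁻ _ in Ioc (0:ℝ) 1, ENNReal.ofReal (c * q 1) :=
            setLIntegral_mono' measurableSet_Ioc hbound1
        _ = ENNReal.ofReal (c * q 1) := by
            simp [Real.volume_Ioc]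
    · calc ∫⁻ t in Ioi (1:ℝ), (ν.restrict A) {y | t < ‖y‖ ^ 2}
          ≤ ∫⁻ t in Ioi (1:ℝ), ENNReal.ofReal (c * r ^ (2 - β)) * ENNReal.ofReal (gq t) :=
            setLIntegral_mono' measurableSet_Ioi hbound2
        _ = ENNReal.ofReal (c * r ^ (2 - β)) * ∫⁻ t in Ioi (1:ℝ), ENNReal.ofReal (gq t) :=
            lintegral_const_mul' _ _ ENNReal.ofReal_ne_top
        _ = ENNReal.ofReal (c * r ^ (2 - β)) * ENNReal.ofReal (2 * Iq) := by rw [hofReal]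
  -- final assembly
  calc ∫⁻ y in Metric.ball (0 : EuclideanSpace ℝ (Fin d)) r, ENNReal.ofReal (‖y‖ ^ 2) ∂ν
      = ∫⁻ y in Metric.ball 0 1 ∪ A, ENNReal.ofReal (‖y‖ ^ 2) ∂ν := by rw [← hsplit]
    _ ≤ M + ∫⁻ y in A, ENNReal.ofReal (‖y‖ ^ 2) ∂ν := lintegral_union_le _ _ _
    _ ≤ ENNReal.ofReal MR +
        (ENNReal.ofReal (c * q 1) + ENNReal.ofReal (c * r ^ (2 - β)) * ENNReal.ofReal (2 * Iq)) := by
        rw [← hM_eq]; exact add_le_add le_rfl hannulus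
    _ = ENNReal.ofReal (MR + (c * q 1 + c * r ^ (2 - β) * (2 * Iq))) := by
        rw [← ENNReal.ofReal_mul (by positivity), ← ENNReal.ofReal_add (by positivity)
          (by positivity), ← ENNReal.ofReal_add hMR_nn (by positivity)]
    _ ≤ ENNReal.ofReal ((MR + c * q 1 + 2 * c * Iq) * r ^ (2 - β)) := by
        refine ENNReal.ofReal_le_ofReal ?_
        nlinarith [mul_nonneg (add_nonneg hMR_nn (by positivity : (0:ℝ) ≤ c * q 1))
          (sub_nonneg.mpr hrp1)]
end

section
/- Suppose $f:\mathbb{R}^d\to[0,\infty)$ satisfies: (i) $f(y)\leq c_1$ for all $y$; (ii) $f$ is $C^1$ with $|\nabla f(y)|\leq c_1$ for all $y$; (iii) $\int_{\mathbb{R}^d}|y|^{2n}f(y)\,dy\leq c(n)$ for every $n\in\mathbb{N}$. Then for every $m\geq 1$ there exists a constant $C(m)$ (depending only on $m$, the $c(n)$'s, $c_1$, and $d$) such that $f(y)\leq C(m)(1+|y|)^{-m}$ for all $y\in\mathbb{R}^d$. -/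
/-! Since `f` is `c₁`-Lipschitz, `f ≥ f y₀ / 2` on the ball of radius `f y₀ / (2 c₁)` around `y₀`,
and on that ball `‖z‖ ≥ ‖y₀‖ / 2` once `‖y₀‖ ≥ 1`. The moment of order `2n` therefore dominates
`f y₀ ^ (d + 1) * ‖y₀‖ ^ (2n)`, and taking `2n ≥ m (d + 1)` gives `f y₀ * ‖y₀‖ ^ m = O(1)`. -/

open MeasureTheory Set Metric Module

theorem half_le_apply_of_mem_ball {E : Type*} [SeminormedAddCommGroup E] {f : E → ℝ} {C : ℝ}
    (hC : 0 < C) (hlip : ∀ x y, ‖f y - f x‖ ≤ C * ‖y - x‖) {x z : E}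
    (hz : z ∈ ball x (f x / (2 * C))) :
    f x / 2 ≤ f z := by
  rw [mem_ball, dist_eq_norm] at hz
  have hdiff : f x - f z ≤ C * ‖z - x‖ :=
    (le_abs_self _).trans ((abs_sub_comm _ _).trans_le (hlip x z))
  have hsmall : C * ‖z - x‖ < f x / 2 :=
    calc C * ‖z - x‖ < C * (f x / (2 * C)) := by gcongr
      _ = f x / 2 := by field_simp
  linarith

theorem div_two_pow_mul_le_norm_pow_mul_of_mem_ball {E : Type*} [SeminormedAddCommGroup E]
    {f : E → ℝ} {C : ℝ} (k : ℕ) (hlip : ∀ x y, ‖f y - f x‖ ≤ C * ‖y - x‖) {y₀ z : E}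
    (hf0 : 0 < f y₀) (hfb : f y₀ ≤ C)
    (hy₀ : 1 ≤ ‖y₀‖) (hz : z ∈ ball y₀ (f y₀ / (2 * C))) :
    (‖y₀‖ / 2) ^ k * (f y₀ / 2) ≤ ‖z‖ ^ k * f z := by
  have hC : 0 < C := hf0.trans_le hfb
  have hr : f y₀ / (2 * C) ≤ ‖y₀‖ / 2 := by
    rw [div_le_div_iff₀ (by positivity) two_pos]
    nlinarith
  have hnorm : ‖y₀‖ / 2 ≤ ‖z‖ := by
    have htri := norm_sub_norm_le y₀ z
    rw [mem_ball, dist_eq_norm, norm_sub_rev] at hz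
    linarith
  gcongr
  exact half_le_apply_of_mem_ball hC hlip hz

theorem pow_finrank_succ_mul_norm_pow_le {E : Type*} [NormedAddCommGroup E] [NormedSpace ℝ E]
    [FiniteDimensional ℝ E] [MeasurableSpace E] [BorelSpace E]
    (μ : Measure E) [μ.IsAddHaarMeasure] {f : E → ℝ} {C M : ℝ} (k : ℕ) (hf0 : ∀ y, 0 ≤ f y)
    (hfb : ∀ y, f y ≤ C) (hlip : ∀ x y, ‖f y - f x‖ ≤ C * ‖y - x‖) (hM : 0 ≤ M)
    (hmom : ∫⁻ y, ENNReal.ofReal (‖y‖ ^ k * f y) ∂μ ≤ ENNReal.ofReal M)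
    {y₀ : E} (hy₀ : 1 ≤ ‖y₀‖) :
    f y₀ ^ (finrank ℝ E + 1) * ‖y₀‖ ^ k ≤
      M * (2 ^ (k + 1) * (2 * C) ^ finrank ℝ E) / μ.real (ball 0 1) := by
  set d := finrank ℝ E
  have hV : 0 < μ.real (ball 0 1) :=
    ENNReal.toReal_pos (measure_ball_pos μ 0 one_pos).ne' measure_ball_lt_top.ne
  rcases (hf0 y₀).eq_or_lt with ha | ha
  · rw [← ha, zero_pow d.succ_ne_zero, zero_mul]
    have hC : 0 ≤ C := (hf0 y₀).trans (hfb y₀)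
    positivity
  set a := f y₀
  have hC : 0 < C := ha.trans_le (hfb y₀)
  set r := a / (2 * C)
  have hr : 0 < r := by positivity
  have hball : ENNReal.ofReal ((‖y₀‖ / 2) ^ k * (a / 2)) * μ (ball y₀ r) ≤ ENNReal.ofReal M :=
    calc _ = ∫⁻ _ in ball y₀ r, ENNReal.ofReal ((‖y₀‖ / 2) ^ k * (a / 2)) ∂μ :=
          (setLIntegral_const _ _).symm
      _ ≤ ∫⁻ z in ball y₀ r, ENNReal.ofReal (‖z‖ ^ k * f z) ∂μ :=
          setLIntegral_mono' measurableSet_ball fun z hz => ENNReal.ofReal_le_ofReal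
            (div_two_pow_mul_le_norm_pow_mul_of_mem_ball k hlip ha (hfb y₀) hy₀ hz)
      _ ≤ ∫⁻ z, ENNReal.ofReal (‖z‖ ^ k * f z) ∂μ := setLIntegral_le_lintegral _ _
      _ ≤ ENNReal.ofReal M := hmom
  rw [Measure.addHaar_ball_of_pos μ y₀ hr, ← mul_assoc,
    ← ENNReal.ofReal_mul (by positivity)] at hball
  have hreal : (‖y₀‖ / 2) ^ k * (a / 2) * r ^ d * μ.real (ball 0 1) ≤ M := by
    have h := ENNReal.toReal_mono ENNReal.ofReal_ne_top hball
    rwa [ENNReal.toReal_mul, ENNReal.toReal_ofReal (by positivity),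
      ENNReal.toReal_ofReal hM] at h
  rw [le_div_iff₀ hV]
  calc a ^ (d + 1) * ‖y₀‖ ^ k * μ.real (ball 0 1)
      = (‖y₀‖ / 2) ^ k * (a / 2) * r ^ d * μ.real (ball 0 1) * (2 ^ (k + 1) * (2 * C) ^ d) := by
        simp only [r, div_pow]
        field_simp
        ring
    _ ≤ M * (2 ^ (k + 1) * (2 * C) ^ d) := by gcongr

theorem mul_rpow_le_max_of_pow_mul_pow_le {a t m K : ℝ} {j k : ℕ} (ha : 0 ≤ a) (ht : 1 ≤ t)
    (hj : j ≠ 0) (hk : m * j ≤ k) (hK : a ^ j * t ^ k ≤ K) :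
    a * t ^ m ≤ max 1 K := by
  have hpow : (a * t ^ m) ^ j ≤ K :=
    calc (a * t ^ m) ^ j = a ^ j * t ^ (m * j) := by
          rw [mul_pow, ← Real.rpow_natCast (t ^ m), ← Real.rpow_mul (by linarith)]
      _ ≤ a ^ j * t ^ k := by
          gcongr
          rw [← Real.rpow_natCast]
          exact Real.rpow_le_rpow_of_exponent_le ht hk
      _ ≤ K := hK
  rcases le_or_gt (a * t ^ m) 1 with h | h
  · exact h.trans (le_max_left _ _)
  · exact (le_self_pow₀ h.le hj).trans hpow |>.trans (le_max_right _ _)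

theorem le_mul_one_add_norm_rpow_neg {E : Type*} [SeminormedAddCommGroup E] {f : E → ℝ}
    {c B m : ℝ} (hm : 0 ≤ m) (hf0 : ∀ y, 0 ≤ f y) (hfb : ∀ y, f y ≤ c)
    (hdecay : ∀ y, 1 ≤ ‖y‖ → f y * ‖y‖ ^ m ≤ B) (y : E) :
    f y ≤ 2 ^ m * max B c * (1 + ‖y‖) ^ (-m) := by
  have hy : 0 < 1 + ‖y‖ := by positivity
  rw [Real.rpow_neg hy.le, ← div_eq_mul_inv, le_div_iff₀ (by positivity)]
  rcases lt_or_ge ‖y‖ 1 with hy1 | hy1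
  · have h2 : (1 + ‖y‖) ^ m ≤ 2 ^ m := by gcongr; linarith
    calc f y * (1 + ‖y‖) ^ m ≤ max B c * 2 ^ m :=
          mul_le_mul ((hfb y).trans (le_max_right _ _)) h2 (by positivity)
            ((hf0 y).trans ((hfb y).trans (le_max_right _ _)))
      _ = 2 ^ m * max B c := mul_comm _ _
  · calc f y * (1 + ‖y‖) ^ m ≤ f y * (2 * ‖y‖) ^ m :=
          mul_le_mul_of_nonneg_left (by gcongr; linarith) (hf0 y)
      _ = 2 ^ m * (f y * ‖y‖ ^ m) := by rw [Real.mul_rpow two_pos.le (norm_nonneg y)]; ring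
      _ ≤ 2 ^ m * max B c := by gcongr; exact (hdecay y hy1).trans (le_max_left _ _)

theorem stmt7_general (d : ℕ)
    (f : EuclideanSpace ℝ (Fin d) → ℝ) (c₁ : ℝ)
    (cfun : ℕ → ℝ)
    (hf0 : ∀ y, 0 ≤ f y)
    (hfb : ∀ y, f y ≤ c₁)
    (hf1 : ContDiff ℝ 1 f)
    (hgrad : ∀ y, ‖fderiv ℝ f y‖ ≤ c₁)
    (hmom : ∀ n : ℕ, ∫⁻ y, ENNReal.ofReal (‖y‖ ^ (2 * n) * f y) ≤ ENNReal.ofReal (cfun n)) :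
    ∀ m : ℝ, 1 ≤ m → ∃ C : ℝ, 0 < C ∧
      ∀ y, f y ≤ C * (1 + ‖y‖) ^ (-m) := by
  intro m hm
  have hlip : ∀ x y, ‖f y - f x‖ ≤ c₁ * ‖y - x‖ := fun x y =>
    convex_univ.norm_image_sub_le_of_norm_fderiv_le
      (fun z _ => hf1.differentiable one_ne_zero z) (fun z _ => hgrad z) (mem_univ x) (mem_univ y)
  obtain ⟨n, hn⟩ := exists_nat_ge (m * (d + 1) / 2)
  set K := max (cfun n) 0 * (2 ^ (2 * n + 1) * (2 * c₁) ^ d) /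
    volume.real (ball (0 : EuclideanSpace ℝ (Fin d)) 1)
  have hkey : ∀ y : EuclideanSpace ℝ (Fin d), 1 ≤ ‖y‖ → f y * ‖y‖ ^ m ≤ max 1 K := by
    intro y hy
    have h := pow_finrank_succ_mul_norm_pow_le volume (2 * n) hf0 hfb hlip (le_max_right _ _)
      ((hmom n).trans (ENNReal.ofReal_le_ofReal (le_max_left _ _))) hy
    rw [finrank_euclideanSpace_fin] at h
    exact mul_rpow_le_max_of_pow_mul_pow_le (hf0 y) hy d.succ_ne_zero
      (by push_cast; linarith) h
  exact ⟨2 ^ m * max (max 1 K) c₁, by positivity,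
    le_mul_one_add_norm_rpow_neg (by linarith) hf0 hfb hkey⟩

/-- Picard's Lemma 9: If `f ≥ 0` is bounded by `c₁`, is `C¹` with
gradient bounded by `c₁`, and has all even moments `∫ |y|^{2n} f(y) dy ≤ c(n)`,
then for every `m ≥ 1` there is `C(m)` with `f(y) ≤ C(m) (1+|y|)^{-m}`. -/
theorem stmt7 (d : ℕ) (hd : 1 ≤ d)
    (f : EuclideanSpace ℝ (Fin d) → ℝ) (c₁ : ℝ) (hc₁ : 0 < c₁)
    (cfun : ℕ → ℝ)
    (hf0 : ∀ y, 0 ≤ f y)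
    (hfb : ∀ y, f y ≤ c₁)
    (hf1 : ContDiff ℝ 1 f)
    (hgrad : ∀ y, ‖fderiv ℝ f y‖ ≤ c₁)
    (hmom : ∀ n : ℕ, ∫⁻ y, ENNReal.ofReal (‖y‖ ^ (2 * n) * f y) ≤ ENNReal.ofReal (cfun n)) :
    ∀ m : ℝ, 1 ≤ m → ∃ C : ℝ, 0 < C ∧
      ∀ y, f y ≤ C * (1 + ‖y‖) ^ (-m) :=
  stmt7_general d f c₁ cfun hf0 hfb hf1 hgrad hmom
end

section
/- Let $\nu$ be a finite measure on $\mathbb{R}^d$. Suppose there exist constants $c_0>0$, $\alpha\in(0,2)$, $\gamma\in[1,d]$, $\varepsilon>0$, a bounded nonincreasing doubling function $\bar{q}$, and $n\in\mathbb{N}$ such that $\nu^{n*}(B(x,r))\leq c_0^n r^{\gamma}(\varepsilon^{-\alpha}\bar{q}(\varepsilon))^{n-1}|x|^{-\alpha-\gamma}\bar{q}(|x|)$ for all $x\neq 0$ and $r\leq\max(\varepsilon/3,|x|/5^n)$, and also $|\nu|\leq c\varepsilon^{-\alpha}\bar{q}(\varepsilon)$ and $\bar{q}(r)/\bar{q}(R)\leq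 c(r/R)^{-\eta}$ for $0<r\leq R$. Then for all $x\in\mathbb{R}^d$ and all $r>0$ (including $r>|x|/5^n$): $\nu^{n*}(B(x,r))\leq C^n(\varepsilon^{-\alpha}\bar{q}(\varepsilon))^{n-1}r^{\gamma}\left(1+\frac{\varepsilon^{-\alpha}\bar{q}(\varepsilon)}{r^{-\alpha}\bar{q}(r)}\right)|x|^{-\alpha-\gamma}\bar{q}(|x|)$ for some constant $C$ depending only on $c_0,c,\alpha,\gamma,\eta$. -/
/-!
For `r ≤ max(ε/3, |x|/5^n)` the bound is the hypothesis. Otherwise `|x| ≤ 5^n r`, and the trivial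
bound `ν^{n*}(B(x,r)) ≤ |ν|^n ≤ (cQ)^n`, `Q = ε^{-α} q(ε)`, suffices: the second summand of the
target is `C^n Q^n (r/|x|)^{γ+α} q(|x|)/q(r)`, where `(r/|x|)^{γ+α} ≥ 5^{-n(γ+α)}` and, by
monotonicity or the doubling bound, `q(r) ≤ max(c,1) 5^{nη} q(|x|)`. Hence
`C = max(c₀, c max(c,1) 5^{γ+α+η})` works.
-/

open MeasureTheory Set

/-- `n`-fold convolution power of a measure, with `ν^{0*} = δ₀`. -/
noncomputable def convPow {d : ℕ} (ν : Measure (EuclideanSpace ℝ (Fin d))) :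
    ℕ → Measure (EuclideanSpace ℝ (Fin d))
  | 0 => Measure.dirac 0
  | n + 1 => Measure.map (fun p : _ × _ => p.1 + p.2) ((convPow ν n).prod ν)

theorem convPow_apply_univ {d : ℕ} (ν : Measure (EuclideanSpace ℝ (Fin d))) [SFinite ν] :
    ∀ n, convPow ν n univ = ν univ ^ n
  | 0 => by simp [convPow]
  | n + 1 => by
    rw [convPow, Measure.map_apply measurable_add MeasurableSet.univ,
      preimage_univ, ← univ_prod_univ, Measure.prod_prod, convPow_apply_univ ν n, pow_succ]

theorem convPow_apply_le_ofReal_pow {d : ℕ} {ν : Measure (EuclideanSpace ℝ (Fin d))} [SFinite ν]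
    {m : ℝ} (hm : 0 ≤ m) (hν : ν univ ≤ ENNReal.ofReal m) (n : ℕ)
    (s : Set (EuclideanSpace ℝ (Fin d))) : convPow ν n s ≤ ENNReal.ofReal (m ^ n) :=
  calc convPow ν n s ≤ convPow ν n univ := measure_mono (subset_univ s)
    _ = ν univ ^ n := convPow_apply_univ ν n
    _ ≤ ENNReal.ofReal m ^ n := by gcongr
    _ = ENNReal.ofReal (m ^ n) := (ENNReal.ofReal_pow hm n).symm

theorem le_max_one_mul_rpow_mul_of_le_mul {q : ℝ → ℝ} {c η : ℝ} (hη : 0 ≤ η)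
    (hqpos : ∀ s, 0 < s → 0 < q s)
    (hqmono : ∀ s t : ℝ, 0 < s → s ≤ t → q t ≤ q s)
    (hqpoly : ∀ r R : ℝ, 0 < r → r ≤ R → q r / q R ≤ c * (r / R) ^ (-η))
    {r R b : ℝ} (hr : 0 < r) (hR : 0 < R) (hb : 1 ≤ b) (hRr : R ≤ b * r) :
    q r ≤ max c 1 * b ^ η * q R := by
  have hqR := hqpos R hR
  rcases le_or_gt R r with hle | hlt
  · calc q r ≤ 1 * 1 * q R := by simpa using hqmono R r hR hle
      _ ≤ max c 1 * b ^ η * q R := by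
        gcongr
        exacts [le_max_right c 1, Real.one_le_rpow hb hη]
  · have hratio : (r / R) ^ (-η) ≤ b ^ η := by
      rw [Real.rpow_neg (by positivity), ← Real.inv_rpow (by positivity), inv_div]
      exact Real.rpow_le_rpow (by positivity) ((div_le_iff₀ hr).mpr hRr) hη
    calc q r ≤ c * (r / R) ^ (-η) * q R := (div_le_iff₀ hqR).mp (hqpoly r R hr hlt.le)
      _ ≤ max c 1 * b ^ η * q R := by
        gcongr
        exact le_max_left c 1

/-- Here `Q` stands for `ε^{-α} q(ε)` and `X` for `|x|`. -/
noncomputable def ballBound (C Q α γ : ℝ) (q : ℝ → ℝ) (n : ℕ) (r X : ℝ) : ℝ :=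
  C ^ n * Q ^ (n - 1) * r ^ γ * (1 + Q / (r ^ (-α) * q r)) * X ^ (-α - γ) * q X

section ballBound

variable {C Q α γ : ℝ} {q : ℝ → ℝ} {n : ℕ} {r X : ℝ}

theorem ballBound_eq (hn : n ≠ 0) (hr : 0 < r) (hX : 0 < X) (hqr : 0 < q r) :
    ballBound C Q α γ q n r X
      = C ^ n * Q ^ (n - 1) * r ^ γ * X ^ (-α - γ) * q X
        + C ^ n * Q ^ n * (r ^ (γ + α) * q X) / (X ^ (γ + α) * q r) := by
  rw [ballBound, show -α - γ = -(γ + α) by ring, Real.rpow_neg hX.le, Real.rpow_neg hr.le,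
    Real.rpow_add hr, ← pow_sub_one_mul hn Q]
  field_simp

theorem le_ballBound_of_le (hqpos : ∀ s, 0 < s → 0 < q s) {c₀ : ℝ} (hc₀ : 0 ≤ c₀) (hC : c₀ ≤ C)
    (hQ : 0 ≤ Q) (hr : 0 < r) (hX : 0 < X) :
    c₀ ^ n * r ^ γ * Q ^ (n - 1) * X ^ (-α - γ) * q X ≤ ballBound C Q α γ q n r X := by
  have hqr := hqpos r hr
  have hqX := hqpos X hX
  have hC₀ : 0 ≤ C := hc₀.trans hC
  calc c₀ ^ n * r ^ γ * Q ^ (n - 1) * X ^ (-α - γ) * q X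
      = c₀ ^ n * 1 * (Q ^ (n - 1) * r ^ γ * X ^ (-α - γ) * q X) := by ring
    _ ≤ C ^ n * (1 + Q / (r ^ (-α) * q r)) * (Q ^ (n - 1) * r ^ γ * X ^ (-α - γ) * q X) := by
      gcongr
      exact le_add_of_nonneg_right (div_nonneg hQ (by positivity))
    _ = ballBound C Q α γ q n r X := by rw [ballBound]; ring

theorem mass_pow_le_ballBound (hγα : 0 ≤ γ + α) {c η : ℝ} (hη : 0 ≤ η) (hc : 0 ≤ c)
    (hqpos : ∀ s, 0 < s → 0 < q s)
    (hqmono : ∀ s t : ℝ, 0 < s → s ≤ t → q t ≤ q s)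
    (hqpoly : ∀ r R : ℝ, 0 < r → r ≤ R → q r / q R ≤ c * (r / R) ^ (-η))
    (hC : c * max c 1 * 5 ^ (γ + α + η) ≤ C) (hQ : 0 ≤ Q) (hn : n ≠ 0) (hr : 0 < r)
    (hX : 0 < X) (hXr : X ≤ 5 ^ n * r) :
    (c * Q) ^ n ≤ ballBound C Q α γ q n r X := by
  have hqr := hqpos r hr
  have hqX := hqpos X hX
  have hC₀ : 0 ≤ C := le_trans (by positivity) hC
  have hXpow : X ^ (γ + α) ≤ (5 ^ (γ + α)) ^ n * r ^ (γ + α) := by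
    rw [Real.rpow_pow_comm (by norm_num), ← Real.mul_rpow (by positivity) hr.le]
    exact Real.rpow_le_rpow hX.le hXr hγα
  have hqr_le : q r ≤ (max c 1 * 5 ^ η) ^ n * q X := by
    calc q r ≤ max c 1 * (5 ^ n) ^ η * q X :=
          le_max_one_mul_rpow_mul_of_le_mul hη hqpos hqmono hqpoly hr hX
            (one_le_pow₀ (by norm_num)) hXr
      _ ≤ max c 1 ^ n * (5 ^ η) ^ n * q X := by
          rw [← Real.rpow_pow_comm (by norm_num)]
          gcongr
          exact le_self_pow₀ (le_max_right c 1) hn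
      _ = (max c 1 * 5 ^ η) ^ n * q X := by rw [mul_pow]
  have hkey : (c * Q) ^ n * (X ^ (γ + α) * q r) ≤ C ^ n * Q ^ n * (r ^ (γ + α) * q X) :=
    calc (c * Q) ^ n * (X ^ (γ + α) * q r)
        ≤ (c * Q) ^ n * ((5 ^ (γ + α)) ^ n * r ^ (γ + α) * ((max c 1 * 5 ^ η) ^ n * q X)) := by
          gcongr
      _ = (c * max c 1 * 5 ^ (γ + α + η)) ^ n * Q ^ n * (r ^ (γ + α) * q X) := by
          rw [Real.rpow_add (by norm_num) (γ + α) η]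
          ring
      _ ≤ C ^ n * Q ^ n * (r ^ (γ + α) * q X) := by gcongr
  rw [ballBound_eq hn hr hX hqr]
  calc (c * Q) ^ n ≤ C ^ n * Q ^ n * (r ^ (γ + α) * q X) / (X ^ (γ + α) * q r) :=
        (le_div_iff₀ (by positivity)).mpr hkey
    _ ≤ _ := le_add_of_nonneg_left (by positivity)

end ballBound

theorem stmt9_general (d : ℕ) (α γ η c₀ c ε : ℝ)
    (hα : α ∈ Set.Ioo (0:ℝ) 2) (hγ : γ ∈ Set.Icc (1:ℝ) d) (hη : 0 ≤ η)
    (hc₀ : 0 < c₀) (hc : 0 < c) (hε : 0 < ε)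
    (ν : Measure (EuclideanSpace ℝ (Fin d))) [IsFiniteMeasure ν]
    (q : ℝ → ℝ)
    (hqpos : ∀ s, 0 < s → 0 < q s)
    (hqmono : ∀ s t : ℝ, 0 < s → s ≤ t → q t ≤ q s)
    (hqpoly : ∀ r R : ℝ, 0 < r → r ≤ R → q r / q R ≤ c * (r / R) ^ (-η))
    (n : ℕ) (hn : 1 ≤ n)
    (hmass : ν Set.univ ≤ ENNReal.ofReal (c * ε ^ (-α) * q ε))
    (hyp : ∀ (x : EuclideanSpace ℝ (Fin d)) (r : ℝ), x ≠ 0 → 0 < r →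
      r ≤ max (ε / 3) (‖x‖ / 5 ^ n) →
      convPow ν n (Metric.ball x r) ≤
        ENNReal.ofReal (c₀ ^ n * r ^ γ * (ε ^ (-α) * q ε) ^ (n - 1)
          * ‖x‖ ^ (-α - γ) * q ‖x‖)) :
    ∃ C : ℝ, 0 < C ∧ ∀ (x : EuclideanSpace ℝ (Fin d)) (r : ℝ), x ≠ 0 → 0 < r →
      convPow ν n (Metric.ball x r) ≤
        ENNReal.ofReal (C ^ n * (ε ^ (-α) * q ε) ^ (n - 1) * r ^ γ
          * (1 + (ε ^ (-α) * q ε) / (r ^ (-α) * q r))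
          * ‖x‖ ^ (-α - γ) * q ‖x‖) := by
  have hQ : 0 < ε ^ (-α) * q ε := mul_pos (Real.rpow_pos_of_pos hε _) (hqpos ε hε)
  have hγα : 0 ≤ γ + α := by linarith [hα.1, hγ.1]
  refine ⟨max c₀ (c * max c 1 * 5 ^ (γ + α + η)), lt_max_of_lt_left hc₀, fun x r hx hr => ?_⟩
  have hX : 0 < ‖x‖ := norm_pos_iff.mpr hx
  by_cases hsmall : r ≤ max (ε / 3) (‖x‖ / 5 ^ n)
  · exact (hyp x r hx hr hsmall).trans <| ENNReal.ofReal_le_ofReal <|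
      le_ballBound_of_le hqpos hc₀.le (le_max_left _ _) hQ.le hr hX
  · have hXr : ‖x‖ ≤ 5 ^ n * r := by
      have := (le_max_right _ _).trans (not_le.mp hsmall).le
      rwa [div_le_iff₀' (by positivity)] at this
    calc convPow ν n (Metric.ball x r) ≤ ENNReal.ofReal ((c * (ε ^ (-α) * q ε)) ^ n) :=
          convPow_apply_le_ofReal_pow (by positivity) (by rwa [← mul_assoc]) n _
      _ ≤ _ := ENNReal.ofReal_le_ofReal <| mass_pow_le_ballBound hγα hη hc.le hqpos hqmono hqpoly
          (le_max_right _ _) hQ.le (by omega) hr hX hXr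

/-- If `ν^{n*}(B(x,r)) ≤ c₀^n r^γ (ε^{-α} q(ε))^{n-1} |x|^{-α-γ} q(|x|)`
for all `x ≠ 0` and `r ≤ max(ε/3, |x|/5^n)`, `|ν| ≤ c ε^{-α} q(ε)`, and `q` has the
polynomial doubling bound `q(r)/q(R) ≤ c (r/R)^{-η}`, then for all `x ≠ 0` and ALL
`r > 0`:
`ν^{n*}(B(x,r)) ≤ C^n (ε^{-α}q(ε))^{n-1} r^γ (1 + (ε^{-α}q(ε))/(r^{-α}q(r))) |x|^{-α-γ} q(|x|)`. -/
theorem stmt9 (d : ℕ) (hd : 1 ≤ d) (α γ η c₀ c ε : ℝ)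
    (hα : α ∈ Set.Ioo (0:ℝ) 2) (hγ : γ ∈ Set.Icc (1:ℝ) d) (hη : 0 ≤ η)
    (hc₀ : 0 < c₀) (hc : 0 < c) (hε : 0 < ε)
    (ν : Measure (EuclideanSpace ℝ (Fin d))) [IsFiniteMeasure ν]
    (q : ℝ → ℝ)
    (hqpos : ∀ s, 0 < s → 0 < q s)
    (hqbdd : ∃ B : ℝ, ∀ s, 0 < s → q s ≤ B)
    (hqmono : ∀ s t : ℝ, 0 < s → s ≤ t → q t ≤ q s)
    (hqpoly : ∀ r R : ℝ, 0 < r → r ≤ R → q r / q R ≤ c * (r / R) ^ (-η))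
    (n : ℕ) (hn : 1 ≤ n)
    (hmass : ν Set.univ ≤ ENNReal.ofReal (c * ε ^ (-α) * q ε))
    (hyp : ∀ (x : EuclideanSpace ℝ (Fin d)) (r : ℝ), x ≠ 0 → 0 < r →
      r ≤ max (ε / 3) (‖x‖ / 5 ^ n) →
      convPow ν n (Metric.ball x r) ≤
        ENNReal.ofReal (c₀ ^ n * r ^ γ * (ε ^ (-α) * q ε) ^ (n - 1)
          * ‖x‖ ^ (-α - γ) * q ‖x‖)) :
    ∃ C : ℝ, 0 < C ∧ ∀ (x : EuclideanSpace ℝ (Fin d)) (r : ℝ), x ≠ 0 → 0 < r →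
      convPow ν n (Metric.ball x r) ≤
        ENNReal.ofReal (C ^ n * (ε ^ (-α) * q ε) ^ (n - 1) * r ^ γ
          * (1 + (ε ^ (-α) * q ε) / (r ^ (-α) * q r))
          * ‖x‖ ^ (-α - γ) * q ‖x‖) :=
  stmt9_general d α γ η c₀ c ε hα hγ hη hc₀ hc hε ν q hqpos hqmono hqpoly n hn hmass hyp
end

section
/- If $\nu$ is a measure on $\mathbb{R}^d$ satisfying $\int_{|y|\leq r}|\langle\theta,y\rangle|^2\,\nu(dy)\geq c\,r^{2-\alpha}$ for all $r\leq 1$ and all unit vectors $\theta$, then $\Phi(\xi)=\int(1-\cos\langle\xi,y\rangle)\,\nu(dy)$ satisfies $\Phi(\xi)\geq c'\,|\xi|^{\alpha}$ for all $|\xi|>1$, for some constant $c'>0$. -/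
/-!
On the ball `|y| ≤ 1/|ξ|` we have `|⟨ξ, y⟩| ≤ 1 ≤ π`, where `1 - cos t ≥ (2/π²) t²`. Writing
`ξ = |ξ| θ`, this bounds `Φ(ξ)` below by `(2/π²) |ξ|² ∫_{|y| ≤ 1/|ξ|} ⟨θ, y⟩² ν(dy)`, and the
hypothesis at radius `r = 1/|ξ|` turns this into `(2c/π²) |ξ|^α`. The Lévy integrability of `ν`,
via `1 - cos t ≤ min 2 (t²/2)`, makes `Φ(ξ)` finite, so the bound survives passing to `toReal`.
-/

open MeasureTheory Set Real

open scoped RealInnerProductSpace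

lemma Real.rpow_eq_sq_mul_inv_rpow_sub {x : ℝ} (hx : 0 < x) (α : ℝ) :
    x ^ α = x ^ 2 * x⁻¹ ^ (2 - α) := by
  rw [inv_rpow hx.le, ← rpow_neg hx.le, ← rpow_two, ← rpow_add hx]
  norm_num

lemma Real.one_sub_cos_le_min (x : ℝ) : 1 - cos x ≤ min 2 (x ^ 2 / 2) :=
  le_min (by linarith [neg_one_le_cos x]) (by linarith [one_sub_sq_div_two_le_cos (x := x)])

section InnerProductSpace

variable {E : Type*} [NormedAddCommGroup E] [InnerProductSpace ℝ E]

lemma one_sub_cos_inner_le_mul_min_one_sq (ξ y : E) :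
    1 - cos ⟪ξ, y⟫ ≤ max 2 (‖ξ‖ ^ 2 / 2) * min 1 (‖y‖ ^ 2) := by
  rcases le_total (‖y‖ ^ 2) 1 with hy | hy
  · rw [min_eq_right hy]
    have hinner : ⟪ξ, y⟫ ^ 2 ≤ ‖ξ‖ ^ 2 * ‖y‖ ^ 2 := by
      rw [← mul_pow, ← sq_abs]
      gcongr
      exact abs_real_inner_le_norm ξ y
    calc 1 - cos ⟪ξ, y⟫ ≤ ⟪ξ, y⟫ ^ 2 / 2 := (one_sub_cos_le_min _).trans (min_le_right _ _)
      _ ≤ ‖ξ‖ ^ 2 / 2 * ‖y‖ ^ 2 := by linarith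
      _ ≤ max 2 (‖ξ‖ ^ 2 / 2) * ‖y‖ ^ 2 := by gcongr; exact le_max_right _ _
  · rw [min_eq_left hy, mul_one]
    exact ((one_sub_cos_le_min _).trans (min_le_left _ _)).trans (le_max_left _ _)

variable [MeasurableSpace E]

lemma lintegral_one_sub_cos_inner_lt_top {ν : Measure E}
    (hν : ∫⁻ y, ENNReal.ofReal (min 1 (‖y‖ ^ 2)) ∂ν < ⊤) (ξ : E) :
    ∫⁻ y, ENNReal.ofReal (1 - cos ⟪ξ, y⟫) ∂ν < ⊤ := by
  set K := max 2 (‖ξ‖ ^ 2 / 2)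
  calc ∫⁻ y, ENNReal.ofReal (1 - cos ⟪ξ, y⟫) ∂ν
      ≤ ∫⁻ y, ENNReal.ofReal K * ENNReal.ofReal (min 1 (‖y‖ ^ 2)) ∂ν := by
        refine lintegral_mono fun y => ?_
        rw [← ENNReal.ofReal_mul (by positivity)]
        exact ENNReal.ofReal_le_ofReal (one_sub_cos_inner_le_mul_min_one_sq ξ y)
    _ = ENNReal.ofReal K * ∫⁻ y, ENNReal.ofReal (min 1 (‖y‖ ^ 2)) ∂ν :=
        lintegral_const_mul' _ _ ENNReal.ofReal_ne_top
    _ < ⊤ := ENNReal.mul_lt_top ENNReal.ofReal_lt_top hν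

lemma ofReal_mul_setLIntegral_inner_sq_le_lintegral_one_sub_cos [OpensMeasurableSpace E]
    (ν : Measure E) {ξ : E} (hξ : ξ ≠ 0) :
    ENNReal.ofReal (2 / π ^ 2 * ‖ξ‖ ^ 2) *
        ∫⁻ y in Metric.closedBall 0 ‖ξ‖⁻¹, ENNReal.ofReal (⟪‖ξ‖⁻¹ • ξ, y⟫ ^ 2) ∂ν ≤
      ∫⁻ y, ENNReal.ofReal (1 - cos ⟪ξ, y⟫) ∂ν := by
  have hξ0 : 0 < ‖ξ‖ := norm_pos_iff.2 hξ
  rw [← lintegral_const_mul' _ _ ENNReal.ofReal_ne_top]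
  refine (setLIntegral_mono' measurableSet_closedBall fun y hy => ?_).trans
    (setLIntegral_le_lintegral _ _)
  rw [mem_closedBall_zero_iff] at hy
  have habs : |⟪ξ, y⟫| ≤ π :=
    calc |⟪ξ, y⟫| ≤ ‖ξ‖ * ‖y‖ := abs_real_inner_le_norm ξ y
      _ ≤ ‖ξ‖ * ‖ξ‖⁻¹ := by gcongr
      _ = 1 := mul_inv_cancel₀ hξ0.ne'
      _ ≤ π := by linarith [pi_gt_three]
  rw [← ENNReal.ofReal_mul (by positivity)]
  refine ENNReal.ofReal_le_ofReal ?_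
  calc 2 / π ^ 2 * ‖ξ‖ ^ 2 * ⟪‖ξ‖⁻¹ • ξ, y⟫ ^ 2 = 2 / π ^ 2 * ⟪ξ, y⟫ ^ 2 := by
        rw [real_inner_smul_left]
        field_simp
    _ ≤ 1 - cos ⟪ξ, y⟫ := by linarith [cos_le_one_sub_mul_cos_sq habs]

end InnerProductSpace

theorem stmt14_general (d : ℕ) (α c : ℝ)
    (hc : 0 < c)
    (ν : Measure (EuclideanSpace ℝ (Fin d)))
    (hlevy : ∫⁻ y, ENNReal.ofReal (min 1 (‖y‖ ^ 2)) ∂ν < ⊤)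
    (hlow : ∀ r : ℝ, 0 < r → r ≤ 1 → ∀ θ : EuclideanSpace ℝ (Fin d), ‖θ‖ = 1 →
      ENNReal.ofReal (c * r ^ (2 - α)) ≤
        ∫⁻ y in Metric.closedBall (0 : EuclideanSpace ℝ (Fin d)) r,
          ENNReal.ofReal ((inner ℝ θ y : ℝ) ^ 2) ∂ν)
    (Φ : EuclideanSpace ℝ (Fin d) → ℝ)
    (hΦ : ∀ ξ, Φ ξ = (∫⁻ y, ENNReal.ofReal (1 - Real.cos (inner ℝ ξ y : ℝ)) ∂ν).toReal) :
    ∃ c' : ℝ, 0 < c' ∧ ∀ ξ : EuclideanSpace ℝ (Fin d), 1 < ‖ξ‖ →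
      c' * ‖ξ‖ ^ α ≤ Φ ξ := by
  refine ⟨c * (2 / π ^ 2), by positivity, fun ξ hξ => ?_⟩
  have hξ0 : 0 < ‖ξ‖ := one_pos.trans hξ
  have hθ : ‖‖ξ‖⁻¹ • ξ‖ = 1 := by rw [norm_smul, norm_inv, norm_norm, inv_mul_cancel₀ hξ0.ne']
  rw [hΦ, ← ENNReal.ofReal_le_iff_le_toReal (lintegral_one_sub_cos_inner_lt_top hlevy ξ).ne]
  calc ENNReal.ofReal (c * (2 / π ^ 2) * ‖ξ‖ ^ α)
      = ENNReal.ofReal (2 / π ^ 2 * ‖ξ‖ ^ 2) * ENNReal.ofReal (c * ‖ξ‖⁻¹ ^ (2 - α)) := by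
        rw [← ENNReal.ofReal_mul (by positivity), rpow_eq_sq_mul_inv_rpow_sub hξ0 α]
        ring_nf
    _ ≤ ENNReal.ofReal (2 / π ^ 2 * ‖ξ‖ ^ 2) *
          ∫⁻ y in Metric.closedBall 0 ‖ξ‖⁻¹, ENNReal.ofReal (⟪‖ξ‖⁻¹ • ξ, y⟫ ^ 2) ∂ν := by
        gcongr
        exact hlow _ (inv_pos.2 hξ0) (inv_le_one_of_one_le₀ hξ.le) _ hθ
    _ ≤ _ := ofReal_mul_setLIntegral_inner_sq_le_lintegral_one_sub_cos ν (norm_pos_iff.1 hξ0)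

/-- If `∫_{|y|≤r} |⟨θ,y⟩|² ν(dy) ≥ c r^{2-α}` for all `r ≤ 1` and
unit vectors `θ`, then `Φ(ξ) = ∫ (1-cos⟨ξ,y⟩) ν(dy)` satisfies
`Φ(ξ) ≥ c' |ξ|^α` for `|ξ| > 1`. -/
theorem stmt14 (d : ℕ) (hd : 1 ≤ d) (α c : ℝ)
    (hα : α ∈ Set.Ioo (0:ℝ) 2) (hc : 0 < c)
    (ν : Measure (EuclideanSpace ℝ (Fin d)))
    (hlevy : ∫⁻ y, ENNReal.ofReal (min 1 (‖y‖ ^ 2)) ∂ν < ⊤)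
    (hlow : ∀ r : ℝ, 0 < r → r ≤ 1 → ∀ θ : EuclideanSpace ℝ (Fin d), ‖θ‖ = 1 →
      ENNReal.ofReal (c * r ^ (2 - α)) ≤
        ∫⁻ y in Metric.closedBall (0 : EuclideanSpace ℝ (Fin d)) r,
          ENNReal.ofReal ((inner ℝ θ y : ℝ) ^ 2) ∂ν)
    (Φ : EuclideanSpace ℝ (Fin d) → ℝ)
    (hΦ : ∀ ξ, Φ ξ = (∫⁻ y, ENNReal.ofReal (1 - Real.cos (inner ℝ ξ y : ℝ)) ∂ν).toReal) :
    ∃ c' : ℝ, 0 < c' ∧ ∀ ξ : EuclideanSpace ℝ (Fin d), 1 < ‖ξ‖ →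
      c' * ‖ξ‖ ^ α ≤ Φ ξ :=
  stmt14_general d α c hc ν hlevy hlow Φ hΦ
end

section
/- Let $\bar{P}_t=e^{-t|\bar\nu|}\sum_{n\geq 0}\frac{t^n\bar\nu^{n*}}{n!}$ where $\bar\nu=\mathbf{1}_{B(0,a t^{1/\alpha})^c}\nu$ for a symmetric measure $\nu$ satisfying $\nu(B(0,r)^c)\leq c_2 r^{-\alpha}$ for $r\in(0,1)$. Then for any $x$, $r>0$, $t\in(0,1)$, $a\in(0,1)$ with $|x|>r+at^{1/\alpha}$: $\bar{P}_t(B(x,r))\geq e^{-c_2 a^{-\alpha}}\,t\,\nu(B(x,r))$. -/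
open MeasureTheory Set

/-- The compound Poisson measure `e^{-t|λ|} ∑ t^n λ^{n*} / n!`. -/
noncomputable def compoundPoisson {d : ℕ} (lam : Measure (EuclideanSpace ℝ (Fin d)))
    (t : ℝ) : Measure (EuclideanSpace ℝ (Fin d)) :=
  ENNReal.ofReal (Real.exp (-(t * (lam Set.univ).toReal))) •
    Measure.sum (fun n : ℕ => ((ENNReal.ofReal t) ^ n / (Nat.factorial n : ENNReal)) • convPow lam n)

lemma convPow_one {d : ℕ} (ν : Measure (EuclideanSpace ℝ (Fin d))) [SFinite ν] :
    convPow ν 1 = ν := by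
  show Measure.map (fun p : _ × _ => p.1 + p.2) ((Measure.dirac 0).prod ν) = ν
  rw [Measure.dirac_prod, Measure.map_map (by fun_prop) (by fun_prop)]
  simp [Function.comp_def]

/-- Let `P̄_t` be the compound Poisson semigroup of
`ν̄ = 1_{B(0, a t^{1/α})ᶜ} ν` where `ν` is symmetric with
`ν(B(0,r)ᶜ) ≤ c₂ r^{-α}` for `r ∈ (0,1)`. Then for `t,a ∈ (0,1)`, `r > 0` and
`|x| > r + a t^{1/α}`: `P̄_t(B(x,r)) ≥ e^{-c₂ a^{-α}} t ν(B(x,r))`. -/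
theorem stmt17 (d : ℕ) (hd : 1 ≤ d) (α c₂ : ℝ)
    (hα : α ∈ Set.Ioo (0:ℝ) 2) (hc₂ : 0 < c₂)
    (ν : Measure (EuclideanSpace ℝ (Fin d)))
    (hsymm : ν.map (fun y => -y) = ν)
    (hν : ∀ r : ℝ, 0 < r → r < 1 →
      ν (Metric.ball (0 : EuclideanSpace ℝ (Fin d)) r)ᶜ ≤ ENNReal.ofReal (c₂ * r ^ (-α))) :
    ∀ (t a r : ℝ) (x : EuclideanSpace ℝ (Fin d)),
      0 < t → t < 1 → 0 < a → a < 1 → 0 < r → r + a * t ^ (1 / α) < ‖x‖ →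
      ENNReal.ofReal (Real.exp (-(c₂ * a ^ (-α))) * t) * ν (Metric.ball x r)
        ≤ compoundPoisson
            (ν.restrict ((Metric.ball (0 : EuclideanSpace ℝ (Fin d)) (a * t ^ (1 / α)))ᶜ)) t
            (Metric.ball x r) := by
  intro t a r x ht ht1 ha ha1 hr hx
  obtain ⟨hα0, hα2⟩ := hα
  set ρ : ℝ := a * t ^ (1 / α) with hρ
  have htpow : 0 < t ^ (1 / α) := Real.rpow_pos_of_pos ht _
  have hρ0 : 0 < ρ := mul_pos ha htpow
  have hρ1 : ρ < 1 := by
    have h1 : t ^ (1 / α) < 1 := by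
      apply Real.rpow_lt_one ht.le ht1 (by positivity)
    nlinarith
  set lam := ν.restrict ((Metric.ball (0 : EuclideanSpace ℝ (Fin d)) ρ)ᶜ) with hlam
  -- mass bound
  have hmass : lam Set.univ ≤ ENNReal.ofReal (c₂ * ρ ^ (-α)) := by
    rw [hlam, Measure.restrict_apply MeasurableSet.univ, univ_inter]
    exact hν ρ hρ0 hρ1
  have hfin : IsFiniteMeasure lam :=
    ⟨lt_of_le_of_lt hmass ENNReal.ofReal_lt_top⟩
  -- lam on the ball equals ν
  have hsub : Metric.ball x r ⊆ (Metric.ball (0 : EuclideanSpace ℝ (Fin d)) ρ)ᶜ := by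
    intro y hy
    simp only [Metric.mem_ball, mem_compl_iff, not_lt, dist_zero_right] at *
    have h1 : ‖x‖ - ‖y‖ ≤ dist y x := by
      rw [dist_comm, dist_eq_norm]; exact norm_sub_norm_le x y
    linarith
  have hball : lam (Metric.ball x r) = ν (Metric.ball x r) := by
    rw [hlam, Measure.restrict_apply Metric.isOpen_ball.measurableSet,
      inter_eq_left.mpr hsub]
  -- exponent bound : t * (lam univ).toReal ≤ c₂ * a ^ (-α)
  have hrw : c₂ * ρ ^ (-α) = c₂ * a ^ (-α) * t⁻¹ := by
    rw [hρ, Real.mul_rpow ha.le htpow.le, ← Real.rpow_mul ht.le]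
    have he : 1 / α * (-α) = -1 := by field_simp
    rw [he, Real.rpow_neg_one]
    ring
  have hexp : t * (lam Set.univ).toReal ≤ c₂ * a ^ (-α) := by
    have h1 : (lam Set.univ).toReal ≤ c₂ * ρ ^ (-α) := by
      refine ENNReal.toReal_le_of_le_ofReal (by positivity) hmass
    calc t * (lam Set.univ).toReal ≤ t * (c₂ * ρ ^ (-α)) := by
          exact mul_le_mul_of_nonneg_left h1 ht.le
      _ = c₂ * a ^ (-α) := by rw [hrw]; field_simp
  -- main computation
  haveI := hfin
  haveI hSF : SFinite lam := inferInstance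
  rw [compoundPoisson, Measure.smul_apply, Measure.sum_apply _ Metric.isOpen_ball.measurableSet]
  have hterm : (ENNReal.ofReal t) ^ 1 / (Nat.factorial 1 : ENNReal) * (convPow lam 1) (Metric.ball x r)
      ≤ ∑' n : ℕ, ((ENNReal.ofReal t) ^ n / (Nat.factorial n : ENNReal)) • (convPow lam n) (Metric.ball x r) := by
    exact le_trans (le_of_eq rfl) (ENNReal.le_tsum 1)
  have hterm1 : (ENNReal.ofReal t) ^ 1 / (Nat.factorial 1 : ENNReal) * (convPow lam 1) (Metric.ball x r)
      = ENNReal.ofReal t * ν (Metric.ball x r) := by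
    rw [convPow_one, hball]
    simp
  calc ENNReal.ofReal (Real.exp (-(c₂ * a ^ (-α))) * t) * ν (Metric.ball x r)
      = ENNReal.ofReal (Real.exp (-(c₂ * a ^ (-α)))) * (ENNReal.ofReal t * ν (Metric.ball x r)) := by
        rw [← mul_assoc, ← ENNReal.ofReal_mul (Real.exp_nonneg _)]
    _ ≤ ENNReal.ofReal (Real.exp (-(t * (lam Set.univ).toReal))) *
        (ENNReal.ofReal t * ν (Metric.ball x r)) := by
        exact mul_le_mul_left
          (ENNReal.ofReal_le_ofReal (Real.exp_le_exp.mpr (by linarith))) _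
    _ ≤ ENNReal.ofReal (Real.exp (-(t * (lam Set.univ).toReal))) *
        ∑' n : ℕ, ((ENNReal.ofReal t) ^ n / (Nat.factorial n : ENNReal)) • (convPow lam n) (Metric.ball x r) := by
        exact mul_le_mul_right (hterm1 ▸ hterm) _
    _ = _ := by
        simp only [smul_eq_mul, ENNReal.smul_def]
        rfl
end

section
/- Let $p$ be a bounded nonnegative function with $p(y)\leq c\,t^{-d/\alpha}(1+t^{-1/\alpha}|y|)^{-m}$ for all $y$, where $m>\gamma$, and let $\lambda$ be a finite measure satisfying $\lambda(B(x,\rho))\leq M\,\rho^{\gamma}(1+\rho^{\alpha+\eta}t^{-(\alpha+\eta)/\alpha})$ for all $\rho>0$, where $m>\gamma+\alpha+\eta$. Then the convolution satisfies $(p*\lambda)(x)\leq C\,c\,M\,t^{(\gamma-d)/\alpha}$ for a constant $C$ depending only on $d,\alpha,\gamma,\eta,m$, where $(p*\lambda)(x)=\int p(x-z)\lambda(dz)$. -/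
open MeasureTheory Set

private def annuli {E : Type*} [PseudoMetricSpace E] (x : E) (r : ℝ) : ℕ → Set E
  | 0 => Metric.ball x r
  | n + 1 => Metric.ball x (2 ^ (n + 1) * r) \ Metric.ball x (2 ^ n * r)

/-- layer-cake convolution estimate: If
`0 ≤ p(y) ≤ c t^{-d/α} (1 + t^{-1/α}|y|)^{-m}` with `m > γ + α + η` (and `m > γ`),
and `λ(B(x,ρ)) ≤ M ρ^γ (1 + ρ^{α+η} t^{-(α+η)/α})` for all `ρ > 0`, then
`(p∗λ)(x) = ∫ p(x-z) λ(dz) ≤ C c M t^{(γ-d)/α}` with `C = C(d,α,γ,η,m)`. -/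
theorem stmt19 (d : ℕ) (hd : 1 ≤ d) (α γ η m : ℝ)
    (hα : α ∈ Set.Ioo (0:ℝ) 2) (hγ : γ ∈ Set.Icc (1:ℝ) d) (hη : 0 ≤ η)
    (hm : γ < m) (hm' : γ + α + η < m) :
    ∃ C : ℝ, 0 < C ∧
      ∀ (t c M : ℝ), 0 < t → t < 1 → 0 < c → 0 < M →
      ∀ (x : EuclideanSpace ℝ (Fin d)) (p : EuclideanSpace ℝ (Fin d) → ℝ)
        (lam : Measure (EuclideanSpace ℝ (Fin d))), IsFiniteMeasure lam →
      (∀ y, 0 ≤ p y) →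
      (∀ y, p y ≤ c * t ^ (-(d : ℝ) / α) * (1 + t ^ (-1 / α) * ‖y‖) ^ (-m)) →
      (∀ ρ : ℝ, 0 < ρ → lam (Metric.ball x ρ) ≤
        ENNReal.ofReal (M * ρ ^ γ * (1 + ρ ^ (α + η) * t ^ (-(α + η) / α)))) →
      (∫⁻ z, ENNReal.ofReal (p (x - z)) ∂lam)
        ≤ ENNReal.ofReal (C * c * M * t ^ ((γ - (d : ℝ)) / α)) := by
  obtain ⟨hα0, hα2⟩ := hα
  obtain ⟨hγ1, hγd⟩ := hγ
  have hm0 : (0:ℝ) < m := by linarith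
  set δ : ℝ := m - (γ + α + η) with hδdef
  have hδ : 0 < δ := by rw [hδdef]; linarith
  set q : ℝ := (2:ℝ) ^ (-δ) with hqdef
  have hq0 : 0 < q := Real.rpow_pos_of_pos two_pos _
  have hq1 : q < 1 := Real.rpow_lt_one_of_one_lt_of_neg one_lt_two (by linarith)
  refine ⟨(2:ℝ) ^ (m + 1) * (1 - q)⁻¹,
    mul_pos (Real.rpow_pos_of_pos two_pos _) (inv_pos.2 (by linarith)), ?_⟩
  intro t c M ht ht1 hc hM x p lam _ hp0 hpb hball
  set r : ℝ := t ^ (1 / α) with hrdef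
  have hr : 0 < r := Real.rpow_pos_of_pos ht _
  set A := annuli x r with hAdef
  -- covering
  have hsub : ∀ n : ℕ, Metric.ball x ((2:ℝ) ^ n * r) ⊆ ⋃ k, A k := by
    intro n
    induction n with
    | zero =>
      intro z hz
      refine Set.mem_iUnion.2 ⟨0, ?_⟩
      simp only [hAdef, annuli]
      simpa using hz
    | succ n ih =>
      intro z hz
      by_cases h : z ∈ Metric.ball x ((2:ℝ) ^ n * r)
      · exact ih h
      · refine Set.mem_iUnion.2 ⟨n + 1, ?_⟩
        simp only [hAdef, annuli]
        exact ⟨hz, h⟩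
  have huniv : (⋃ k, A k) = Set.univ := by
    apply Set.eq_univ_of_forall
    intro z
    obtain ⟨n, hn⟩ := pow_unbounded_of_one_lt (dist z x / r) (one_lt_two (α := ℝ))
    refine hsub n ?_
    rw [Metric.mem_ball]
    rw [div_lt_iff₀ hr] at hn
    linarith
  set K : ℝ := c * M * (2:ℝ) ^ (m + 1) * t ^ ((γ - (d:ℝ)) / α) with hKdef
  have hK0 : 0 ≤ K := by positivity
  have hrpow : ∀ s : ℝ, r ^ s = t ^ (s / α) := by
    intro s
    rw [hrdef, ← Real.rpow_mul ht.le]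
    congr 1; ring
  have hAmeas : ∀ k : ℕ, MeasurableSet (A k) := by
    intro k
    rw [hAdef]
    cases k with
    | zero => exact measurableSet_ball
    | succ n => exact measurableSet_ball.diff measurableSet_ball
  have hAsub : ∀ k : ℕ, A k ⊆ Metric.ball x ((2:ℝ) ^ k * r) := by
    intro k
    rw [hAdef]
    cases k with
    | zero => simp [annuli]
    | succ n => exact Set.diff_subset
  have hterm : ∀ k : ℕ, (∫⁻ z in A k, ENNReal.ofReal (p (x - z)) ∂lam)
      ≤ ENNReal.ofReal (K * q ^ k) := by
    intro k
    have hu0 : (0:ℝ) < 2 ^ k := by positivity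
    have hu1 : (1:ℝ) ≤ 2 ^ k := one_le_pow₀ one_le_two
    set P : ℝ := c * t ^ (-(d:ℝ) / α) * ((2:ℝ) ^ m * ((2:ℝ) ^ k) ^ (-m)) with hPdef
    have hP0 : 0 ≤ P := by positivity
    set L : ℝ := M * ((2:ℝ) ^ k * r) ^ γ *
        (1 + ((2:ℝ) ^ k * r) ^ (α + η) * t ^ (-(α + η) / α)) with hLdef
    -- pointwise sup bound on the annulus
    have hsup : ∀ z ∈ A k, p (x - z) ≤ P := by
      intro z hz
      have key : (1 + t ^ (-1 / α) * ‖x - z‖) ^ (-m)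
          ≤ (2:ℝ) ^ m * ((2:ℝ) ^ k) ^ (-m) := by
        cases k with
        | zero =>
          have h1 : (1 + t ^ (-1 / α) * ‖x - z‖) ^ (-m) ≤ 1 :=
            Real.rpow_le_one_of_one_le_of_nonpos (le_add_of_nonneg_right (by positivity)) (by linarith)
          have h2 : (1:ℝ) ≤ (2:ℝ) ^ m := by
            have h3 := Real.rpow_le_rpow_of_exponent_le (one_le_two (α := ℝ)) hm0.le
            rwa [Real.rpow_zero] at h3
          calc (1 + t ^ (-1 / α) * ‖x - z‖) ^ (-m) ≤ 1 := h1
            _ ≤ (2:ℝ) ^ m * ((2:ℝ) ^ (0:ℕ)) ^ (-m) := by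
                simp only [pow_zero, Real.one_rpow, mul_one]; exact h2
        | succ n =>
          rw [hAdef] at hz
          simp only [annuli] at hz
          obtain ⟨hz1, hz2⟩ := hz
          have hzlb : (2:ℝ) ^ n * r ≤ dist z x := by
            simpa [Metric.mem_ball, not_lt] using hz2
          have hnorm : ‖x - z‖ = dist z x := by rw [← dist_eq_norm, dist_comm]
          have htr : t ^ (-1 / α) * r = 1 := by
            rw [hrdef, ← Real.rpow_add ht, show -1 / α + 1 / α = 0 by ring,
              Real.rpow_zero]
          have hlow : (2:ℝ) ^ n ≤ 1 + t ^ (-1 / α) * ‖x - z‖ := by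
            have h3 : t ^ (-1/α) * ((2:ℝ) ^ n * r) ≤ t ^ (-1/α) * ‖x - z‖ := by
              apply mul_le_mul_of_nonneg_left _ (by positivity)
              rw [hnorm]; exact hzlb
            have h4 : t ^ (-1/α) * ((2:ℝ) ^ n * r) = (2:ℝ) ^ n := by
              rw [show t ^ (-1/α) * ((2:ℝ)^n * r) = (2:ℝ)^n * (t^(-1/α) * r) by ring,
                htr, mul_one]
            rw [h4] at h3
            linarith
          have h5 : (1 + t ^ (-1/α) * ‖x - z‖) ^ (-m) ≤ ((2:ℝ) ^ n) ^ (-m) :=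
            Real.rpow_le_rpow_of_nonpos (by positivity) hlow (by linarith)
          have h6 : ((2:ℝ) ^ n) ^ (-m) = (2:ℝ) ^ m * ((2:ℝ) ^ (n+1)) ^ (-m) := by
            rw [← Real.rpow_natCast (2:ℝ) n, ← Real.rpow_natCast (2:ℝ) (n+1),
              ← Real.rpow_mul (by norm_num : (0:ℝ) ≤ 2),
              ← Real.rpow_mul (by norm_num : (0:ℝ) ≤ 2),
              ← Real.rpow_add (by norm_num : (0:ℝ) < 2)]
            congr 1; push_cast; ring
          rw [← h6]; exact h5
      calc p (x - z)
          ≤ c * t ^ (-(d:ℝ) / α) * (1 + t ^ (-1 / α) * ‖x - z‖) ^ (-m) := hpb _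
        _ ≤ P := by
            rw [hPdef]
            exact mul_le_mul_of_nonneg_left key (by positivity)
    have hstep : (∫⁻ z in A k, ENNReal.ofReal (p (x - z)) ∂lam)
        ≤ ENNReal.ofReal P * lam (A k) := by
      calc (∫⁻ z in A k, ENNReal.ofReal (p (x - z)) ∂lam)
          ≤ ∫⁻ _ in A k, ENNReal.ofReal P ∂lam :=
            setLIntegral_mono' (hAmeas k) fun z hz =>
              ENNReal.ofReal_le_ofReal (hsup z hz)
        _ = ENNReal.ofReal P * lam (A k) := setLIntegral_const _ _
    have hmeas : lam (A k) ≤ ENNReal.ofReal L := by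
      refine (measure_mono (hAsub k)).trans ?_
      rw [hLdef]
      exact hball _ (by positivity)
    have hf1 : ((2:ℝ) ^ k * r) ^ γ = ((2:ℝ) ^ k) ^ γ * t ^ (γ / α) := by
      rw [Real.mul_rpow hu0.le hr.le, hrpow]
    have hf2 : ((2:ℝ) ^ k * r) ^ (α + η) * t ^ (-(α + η) / α) = ((2:ℝ) ^ k) ^ (α + η) := by
      rw [Real.mul_rpow hu0.le hr.le, hrpow, mul_assoc, ← Real.rpow_add ht,
        show (α + η) / α + -(α + η) / α = 0 by ring, Real.rpow_zero, mul_one]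
    have hf3 : 1 + ((2:ℝ) ^ k) ^ (α + η) ≤ 2 * ((2:ℝ) ^ k) ^ (α + η) := by
      have h1 : ((2:ℝ) ^ k) ^ (0:ℝ) ≤ ((2:ℝ) ^ k) ^ (α + η) :=
        Real.rpow_le_rpow_of_exponent_le hu1 (by linarith)
      rw [Real.rpow_zero] at h1
      linarith
    have hf4 : ((2:ℝ) ^ k) ^ (-m) * ((2:ℝ) ^ k) ^ γ * ((2:ℝ) ^ k) ^ (α + η) = q ^ k := by
      rw [← Real.rpow_add hu0, ← Real.rpow_add hu0, hqdef,
        ← Real.rpow_natCast ((2:ℝ) ^ (-δ)) k, ← Real.rpow_natCast (2:ℝ) k,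
        ← Real.rpow_mul (by norm_num : (0:ℝ) ≤ 2),
        ← Real.rpow_mul (by norm_num : (0:ℝ) ≤ 2)]
      congr 1
      rw [hδdef]; ring
    have hf5 : t ^ (-(d:ℝ) / α) * t ^ (γ / α) = t ^ ((γ - (d:ℝ)) / α) := by
      rw [← Real.rpow_add ht]; congr 1; ring
    have hf6 : (2:ℝ) ^ (m + 1) = (2:ℝ) ^ m * 2 := by
      rw [Real.rpow_add (by norm_num : (0:ℝ) < 2), Real.rpow_one]
    have hreal : P * L ≤ K * q ^ k := by
      rw [hPdef, hLdef, hf1, hf2]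
      calc c * t ^ (-(d:ℝ)/α) * ((2:ℝ)^m * ((2:ℝ)^k)^(-m)) *
            (M * (((2:ℝ)^k)^γ * t^(γ/α)) * (1 + ((2:ℝ)^k)^(α+η)))
          = (c * M * (2:ℝ)^m * (t^(-(d:ℝ)/α) * t^(γ/α)) *
              (((2:ℝ)^k)^(-m) * ((2:ℝ)^k)^γ)) * (1 + ((2:ℝ)^k)^(α+η)) := by ring
        _ ≤ (c * M * (2:ℝ)^m * (t^(-(d:ℝ)/α) * t^(γ/α)) *
              (((2:ℝ)^k)^(-m) * ((2:ℝ)^k)^γ)) * (2 * ((2:ℝ)^k)^(α+η)) := by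
            apply mul_le_mul_of_nonneg_left hf3 (by positivity)
        _ = K * q ^ k := by
            rw [hKdef, ← hf4, ← hf5, hf6]; ring
    calc (∫⁻ z in A k, ENNReal.ofReal (p (x - z)) ∂lam)
        ≤ ENNReal.ofReal P * lam (A k) := hstep
      _ ≤ ENNReal.ofReal P * ENNReal.ofReal L := mul_le_mul_right hmeas _
      _ = ENNReal.ofReal (P * L) := (ENNReal.ofReal_mul hP0).symm
      _ ≤ ENNReal.ofReal (K * q ^ k) := ENNReal.ofReal_le_ofReal hreal
  have hsum : ∑' k : ℕ, ENNReal.ofReal (K * q ^ k)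
      = ENNReal.ofReal ((2:ℝ) ^ (m + 1) * (1 - q)⁻¹ * c * M * t ^ ((γ - (d:ℝ)) / α)) := by
    have h1 : ∀ k : ℕ, ENNReal.ofReal (K * q ^ k)
        = ENNReal.ofReal K * ENNReal.ofReal q ^ k := by
      intro k
      rw [ENNReal.ofReal_mul hK0, ENNReal.ofReal_pow hq0.le]
    simp only [h1]
    rw [ENNReal.tsum_mul_left, ENNReal.tsum_geometric,
      show (1:ENNReal) - ENNReal.ofReal q = ENNReal.ofReal (1 - q) by
        rw [ENNReal.ofReal_sub 1 hq0.le, ENNReal.ofReal_one],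
      ← ENNReal.ofReal_inv_of_pos (by linarith : (0:ℝ) < 1 - q),
      ← ENNReal.ofReal_mul hK0]
    congr 1
    rw [hKdef]; ring
  calc (∫⁻ z, ENNReal.ofReal (p (x - z)) ∂lam)
      = ∫⁻ z in ⋃ k, A k, ENNReal.ofReal (p (x - z)) ∂lam := by
        rw [huniv, Measure.restrict_univ]
    _ ≤ ∑' k, ∫⁻ z in A k, ENNReal.ofReal (p (x - z)) ∂lam := lintegral_iUnion_le _ _
    _ ≤ ∑' k, ENNReal.ofReal (K * q ^ k) := ENNReal.tsum_le_tsum hterm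
    _ = _ := hsum
end
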